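/- arXiv:1406.2449 — 4 statements merged into one kernel-verified Lean document; each statement's English description precedes it below -/
import Mathlib

section
/- Let n, m, j be positive integers with gcd(n,m) = 1. The number of ordered pairs (P, p), where P is an (n,m)-Dyck path with exactly j peaks and p is a peak of P, equals the number of free (n,m)-paths with exactly j peaks that begin with an up step and end with a down step; equivalently, j·|D(n,m;j)| = |F^UD(n,m;j)|. -/
/-- A free `(n,m)`-path: a word over `{U, D}` (here `true` = `U` = step `(0,1)`,
`false` = `D` = step `(1,0)`) with exactly `m` letters `U` and `n` letters `D`. -/
def IsFreePath (n m : ℕ) (w : List Bool) : Prop :=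
  w.count true = m ∧ w.count false = n

/-- An `(n,m)`-Dyck path: a free `(n,m)`-path that never goes below the line
`y = (m/n)x`, i.e. every prefix with `u` letters `U` and `d` letters `D`
satisfies `n·u ≥ m·d`. -/
def IsDyckPath (n m : ℕ) (w : List Bool) : Prop :=
  IsFreePath n m w ∧ ∀ p : List Bool, p <+: w → m * p.count false ≤ n * p.count true

/-- There is a peak (the factor `UD`) starting at position `i` of `w`. -/
def IsPeakAt (w : List Bool) (i : ℕ) : Prop :=
  [true, false] <+: w.drop i

/-- The number of peaks of a word `w`. -/
noncomputable def numPeaks (w : List Bool) : ℕ :=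
  {i : ℕ | IsPeakAt w i}.ncard

namespace StmtAux


def rot (k : ℕ) (w : List Bool) : List Bool := w.drop k ++ w.take k

def ht (n m : ℕ) (w : List Bool) : ℤ := (n : ℤ) * w.count true - (m : ℤ) * w.count false

lemma ht_append (n m : ℕ) (a b : List Bool) :
    ht n m (a ++ b) = ht n m a + ht n m b := by
  simp [ht, List.count_append]; ring

lemma count_true_add_count_false (l : List Bool) :
    l.count true + l.count false = l.length := by
  induction l with
  | nil => simp
  | cons a t ih => cases a <;> simp [List.count_cons] <;> omega

@[simp] lemma length_rot (k : ℕ) (w : List Bool) : (rot k w).length = w.length := by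
  simp [rot]; omega

@[simp] lemma count_rot (k : ℕ) (w : List Bool) (b : Bool) :
    (rot k w).count b = w.count b := by
  rw [rot, List.count_append, Nat.add_comm, ← List.count_append, List.take_append_drop]

lemma rot_rot_inv (k : ℕ) (w : List Bool) (h : k ≤ w.length) :
    rot (w.length - k) (rot k w) = w := by
  have h1 : (w.drop k).length = w.length - k := by simp
  rw [rot, rot, List.drop_append_of_le_length (by simp),
    List.take_append_of_le_length (by simp)]
  rw [List.drop_eq_nil_of_le (by simp), List.take_of_length_le (le_of_eq h1)]
  simp [List.take_append_drop]

lemma getElem?_rot (k : ℕ) (w : List Bool) (hk : k ≤ w.length) (i : ℕ) (hi : i < w.length) :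
    (rot k w)[i]? = w[(i + k) % w.length]? := by
  have h1 : (w.drop k).length = w.length - k := by simp
  rcases lt_or_ge i (w.length - k) with h | h
  · rw [rot, List.getElem?_append, if_pos (by omega), List.getElem?_drop]
    congr 1
    rw [Nat.mod_eq_of_lt (by omega)]
    omega
  · rw [rot, List.getElem?_append_right (by omega),
      List.getElem?_take_of_lt (by omega)]
    rw [h1]
    congr 1
    have : (i + k) = w.length + (i - (w.length - k)) := by omega
    rw [this, Nat.add_mod_left, Nat.mod_eq_of_lt (by omega)]

/-! ### height along the doubled word -/

variable (n m : ℕ)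

/-- height of prefixes of the doubled word -/
def F (n m : ℕ) (w : List Bool) (k : ℕ) : ℤ := ht n m ((w ++ w).take k)

lemma F_add (w : List Bool) (k t : ℕ) :
    F n m w (k + t) = F n m w k + ht n m (((w ++ w).drop k).take t) := by
  rw [F, F, List.take_add, ht_append]

lemma ht_eq_zero (w : List Bool) (hw : IsFreePath n m w) : ht n m w = 0 := by
  simp [ht, hw.1, hw.2]; ring

lemma length_eq (w : List Bool) (hw : IsFreePath n m w) : w.length = m + n := by
  rw [← count_true_add_count_false w, hw.1, hw.2]

lemma F_period (w : List Bool) (hw : IsFreePath n m w) (t : ℕ) (ht' : t ≤ w.length) :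
    F n m w (w.length + t) = F n m w t := by
  have : (w ++ w).take (w.length + t) = w ++ w.take t := by
    rw [List.take_add, List.take_left, List.drop_left]
  rw [F, this, ht_append, ht_eq_zero n m w hw]
  rw [F, List.take_append_of_le_length ht']
  ring

lemma take_rot (w : List Bool) (k t : ℕ) (hk : k ≤ w.length) (ht' : t ≤ w.length) :
    (rot k w).take t = ((w ++ w).drop k).take t := by
  have : (w ++ w).drop k = w.drop k ++ w := List.drop_append_of_le_length hk
  rw [this, rot]
  rcases le_or_gt t (w.length - k) with h | h
  · rw [List.take_append_of_le_length (by simp; omega),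
      List.take_append_of_le_length (by simp; omega)]
  · rw [List.take_append, List.take_append]
    congr 1
    have h2 : (w.drop k).length = w.length - k := by simp
    rw [h2, List.take_take]
    congr 1
    omega


variable (n m : ℕ)

def MinAt (n m : ℕ) (w : List Bool) (k : ℕ) : Prop :=
  ∀ s ≤ w.length, F n m w k ≤ F n m w s

@[simp] lemma F_zero (w : List Bool) : F n m w 0 = 0 := by simp [F, ht]

lemma F_length (w : List Bool) (hw : IsFreePath n m w) : F n m w w.length = 0 := by
  rw [F, List.take_left]
  exact ht_eq_zero n m w hw

lemma isFreePath_rot (k : ℕ) (w : List Bool) (hw : IsFreePath n m w) :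
    IsFreePath n m (rot k w) := by
  constructor <;> rw [count_rot] <;> [exact hw.1; exact hw.2]

lemma isDyck_iff_take (w : List Bool) :
    IsDyckPath n m w ↔ IsFreePath n m w ∧ ∀ k, k ≤ w.length → 0 ≤ ht n m (w.take k) := by
  constructor
  · rintro ⟨h1, h2⟩
    refine ⟨h1, fun k hk => ?_⟩
    have := h2 (w.take k) (List.take_prefix k w)
    rw [ht]
    have : (m : ℤ) * (w.take k).count false ≤ (n : ℤ) * (w.take k).count true := by
      exact_mod_cast this
    linarith
  · rintro ⟨h1, h2⟩
    refine ⟨h1, fun p hp => ?_⟩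
    have hp' : p = w.take p.length := List.prefix_iff_eq_take.mp hp
    have hl : p.length ≤ w.length := hp.length_le
    have := h2 p.length hl
    rw [← hp', ht] at this
    have : (m : ℤ) * p.count false ≤ (n : ℤ) * p.count true := by linarith
    exact_mod_cast this

lemma F_sub (w : List Bool) (k t : ℕ) (hk : k ≤ w.length) (ht' : t ≤ w.length) :
    ht n m ((rot k w).take t) = F n m w (k + t) - F n m w k := by
  rw [take_rot w k t hk ht', F_add]
  ring

lemma dyck_rot_iff (w : List Bool) (hw : IsFreePath n m w) (k : ℕ) (hk : k ≤ w.length) :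
    IsDyckPath n m (rot k w) ↔ MinAt n m w k := by
  rw [isDyck_iff_take]
  have hfr := isFreePath_rot n m k w hw
  have hlr : (rot k w).length = w.length := length_rot k w
  constructor
  · rintro ⟨-, h2⟩ s hs
    rcases le_or_gt k s with h | h
    · have := h2 (s - k) (by rw [hlr]; omega)
      rw [F_sub n m w k (s - k) hk (by omega)] at this
      have hks : k + (s - k) = s := by omega
      rw [hks] at this
      linarith
    · have ht2 : w.length + s - k ≤ w.length := by omega
      have := h2 (w.length + s - k) (by rw [hlr]; omega)
      rw [F_sub n m w k (w.length + s - k) hk ht2] at this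
      have hks : k + (w.length + s - k) = w.length + s := by omega
      rw [hks, F_period n m w hw s hs] at this
      linarith
  · intro hmin
    refine ⟨hfr, fun t htl => ?_⟩
    rw [hlr] at htl
    rw [F_sub n m w k t hk htl]
    rcases le_or_gt (k + t) w.length with h | h
    · have := hmin (k + t) h
      linarith
    · have h2 : k + t = w.length + (k + t - w.length) := by omega
      rw [h2, F_period n m w hw _ (by omega)]
      have := hmin (k + t - w.length) (by omega)
      linarith

lemma minAt_unique (hn : 0 < n) (hm : 0 < m) (hg : Nat.gcd n m = 1)
    (w : List Bool) (hw : IsFreePath n m w) (k k' : ℕ) (hk : k < w.length)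
    (hk' : k' < w.length) (h1 : MinAt n m w k) (h2 : MinAt n m w k') : k = k' := by
  suffices H : ∀ a b : ℕ, a < w.length → b < w.length → a ≤ b →
      MinAt n m w a → MinAt n m w b → a = b by
    rcases le_total k k' with hle | hle
    · exact H k k' hk hk' hle h1 h2
    · exact (H k' k hk' hk hle h2 h1).symm
  intro a b ha hb hab hma hmb
  have hL : w.length = m + n := length_eq n m w hw
  have hFab : F n m w a = F n m w b :=
    le_antisymm (hma b (le_of_lt hb)) (hmb a (le_of_lt ha))
  set seg := ((w ++ w).drop a).take (b - a) with hseg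
  have hadd : F n m w b = F n m w a + ht n m seg := by
    have : a + (b - a) = b := by omega
    rw [← this, F_add]
  have hseg0 : ht n m seg = 0 := by rw [hFab] at hadd; linarith
  have hlen : seg.length = b - a := by
    rw [hseg, List.length_take, List.length_drop, List.length_append]
    omega
  have hud : seg.count true + seg.count false = b - a := by
    rw [count_true_add_count_false, hlen]
  set u := seg.count true with hu
  set d := seg.count false with hd
  have hnm : n * u = m * d := by
    rw [ht] at hseg0
    have : (n : ℤ) * u = (m : ℤ) * d := by linarith
    exact_mod_cast this
  have hco : Nat.Coprime m n := Nat.coprime_comm.mp hg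
  have hmdvd : m ∣ u := hco.dvd_of_dvd_mul_left ⟨d, by omega⟩
  obtain ⟨c, hc⟩ := hmdvd
  have hdc : d = n * c := by
    have : m * d = m * (n * c) := by rw [← hnm, hc]; ring
    exact Nat.eq_of_mul_eq_mul_left hm this
  rcases Nat.eq_zero_or_pos c with hc0 | hc0
  · subst hc0
    simp only [Nat.mul_zero] at hc hdc
    omega
  · exfalso
    have hmn : m + n ≤ u + d := by rw [hc, hdc]; nlinarith
    omega

lemma exists_minAt (w : List Bool) (hw : IsFreePath n m w) (hL : 0 < w.length) :
    ∃ k, k < w.length ∧ MinAt n m w k := by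
  obtain ⟨k, hk, hmin⟩ := Finset.exists_min_image (Finset.range (w.length + 1))
    (F n m w) ⟨0, by simp⟩
  rw [Finset.mem_range] at hk
  rcases lt_or_ge k w.length with h | h
  · exact ⟨k, h, fun s hs => hmin s (Finset.mem_range.mpr (by omega))⟩
  · have hkL : k = w.length := by omega
    refine ⟨0, hL, fun s hs => ?_⟩
    rw [F_zero, ← F_length n m w hw, ← hkL]
    exact hmin s (Finset.mem_range.mpr (by omega))


lemma lt_of_getElem?_eq_some {l : List Bool} {i : ℕ} {a : Bool} (h : l[i]? = some a) :
    i < l.length := by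
  by_contra h'
  rw [List.getElem?_eq_none (by omega)] at h
  cases h

lemma two_prefix_iff (a b : Bool) (l : List Bool) :
    [a, b] <+: l ↔ l[0]? = some a ∧ l[1]? = some b := by
  constructor
  · rintro ⟨t, rfl⟩
    simp
  · rintro ⟨h0, h1⟩
    match l with
    | [] => simp at h0
    | [x] => simp at h1
    | x :: y :: t =>
      simp only [List.getElem?_cons_zero, Option.some.injEq] at h0
      simp only [List.getElem?_cons_succ, List.getElem?_cons_zero, Option.some.injEq] at h1
      exact ⟨t, by rw [h0, h1]; rfl⟩

lemma isPeakAt_iff (w : List Bool) (i : ℕ) :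
    IsPeakAt w i ↔ w[i]? = some true ∧ w[i + 1]? = some false := by
  rw [IsPeakAt, two_prefix_iff, List.getElem?_drop, List.getElem?_drop]
  norm_num

/-- the finset of peak positions -/
def pk (w : List Bool) : Finset ℕ :=
  (Finset.range w.length).filter fun i => w[i]? = some true ∧ w[i + 1]? = some false

lemma numPeaks_eq_card_pk (w : List Bool) : numPeaks w = (pk w).card := by
  rw [numPeaks, ← Set.ncard_coe_finset]
  congr 1
  ext i
  simp only [Set.mem_setOf_eq, Finset.coe_filter, Finset.mem_range, isPeakAt_iff, pk,
    Set.mem_setOf_eq]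
  constructor
  · rintro ⟨h0, h1⟩
    exact ⟨lt_of_getElem?_eq_some h0, h0, h1⟩
  · rintro ⟨-, h0, h1⟩
    exact ⟨h0, h1⟩

/-- the finset of cyclic peak positions -/
def pkc (w : List Bool) : Finset ℕ :=
  (Finset.range w.length).filter fun i =>
    w[i]? = some true ∧ w[(i + 1) % w.length]? = some false

lemma pk_eq_pkc (w : List Bool) (hend : w[w.length - 1]? = some false) :
    pk w = pkc w := by
  ext i
  simp only [pk, pkc, Finset.mem_filter, Finset.mem_range]
  constructor
  · rintro ⟨hi, h0, h1⟩
    refine ⟨hi, h0, ?_⟩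
    have : i + 1 < w.length := lt_of_getElem?_eq_some h1
    rw [Nat.mod_eq_of_lt this]
    exact h1
  · rintro ⟨hi, h0, h1⟩
    refine ⟨hi, h0, ?_⟩
    rcases lt_or_ge (i + 1) w.length with h | h
    · rwa [Nat.mod_eq_of_lt h] at h1
    · have hi1 : i = w.length - 1 := by omega
      rw [hi1, hend] at h0
      simp at h0

lemma mem_pkc_iff (w : List Bool) (i : ℕ) :
    i ∈ pkc w ↔ i < w.length ∧ w[i]? = some true ∧ w[(i + 1) % w.length]? = some false := by
  simp [pkc]

lemma pkc_rot_card (w : List Bool) (k : ℕ) (hk : k ≤ w.length) :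
    (pkc (rot k w)).card = (pkc w).card := by
  rcases Nat.eq_zero_or_pos w.length with hL | hL
  · have : w = [] := List.length_eq_zero_iff.mp hL
    subst this
    simp [rot]
  set L := w.length with hLdef
  have key : ∀ i, i < L → ((rot k w)[i]? = w[(i + k) % L]?) := fun i hi =>
    getElem?_rot k w hk i hi
  have hmodlt : ∀ x : ℕ, x % L < L := fun x => Nat.mod_lt _ hL
  have hfwd : ∀ x, x < L → ((x + k) % L + (L - k)) % L = x := by
    intro x hx
    rw [Nat.mod_add_mod]
    have : x + k + (L - k) = x + L := by omega
    rw [this, Nat.add_mod_right, Nat.mod_eq_of_lt hx]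
  have hbwd : ∀ x, x < L → ((x + (L - k)) % L + k) % L = x := by
    intro x hx
    rw [Nat.mod_add_mod]
    have : x + (L - k) + k = x + L := by omega
    rw [this, Nat.add_mod_right, Nat.mod_eq_of_lt hx]
  apply Finset.card_bij' (fun i _ => (i + k) % L) (fun j _ => (j + (L - k)) % L)
  · intro i hi
    rw [mem_pkc_iff, length_rot] at hi
    obtain ⟨hiL, h0, h1⟩ := hi
    rw [key i hiL] at h0
    rw [key ((i + 1) % L) (hmodlt _)] at h1
    rw [mem_pkc_iff]
    refine ⟨hmodlt _, h0, ?_⟩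
    have : ((i + 1) % L + k) % L = ((i + k) % L + 1) % L := by
      rw [Nat.mod_add_mod, Nat.mod_add_mod]
      congr 1
      omega
    rwa [this] at h1
  · intro j hj
    rw [mem_pkc_iff] at hj
    obtain ⟨hjL, h0, h1⟩ := hj
    rw [mem_pkc_iff, length_rot]
    set i := (j + (L - k)) % L with hidef
    have hik : (i + k) % L = j := hbwd j hjL
    refine ⟨hmodlt _, ?_, ?_⟩
    · rw [key i (hmodlt _), hik]
      exact h0
    · rw [key ((i + 1) % L) (hmodlt _)]
      have : ((i + 1) % L + k) % L = (j + 1) % L := by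
        rw [Nat.mod_add_mod]
        have h2 : i + 1 + k = i + k + 1 := by omega
        rw [h2, ← Nat.mod_add_mod, hik]
      rw [this]
      exact h1
  · intro i hi
    rw [mem_pkc_iff, length_rot] at hi
    exact hfwd i hi.1
  · intro j hj
    rw [mem_pkc_iff] at hj
    exact hbwd j hj.1

lemma numPeaks_rot (w : List Bool) (k : ℕ) (hk : k ≤ w.length)
    (hend : w[w.length - 1]? = some false)
    (hend' : (rot k w)[w.length - 1]? = some false) :
    numPeaks (rot k w) = numPeaks w := by
  rw [numPeaks_eq_card_pk, numPeaks_eq_card_pk,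
    pk_eq_pkc w hend, pk_eq_pkc (rot k w) (by rwa [length_rot]),
    pkc_rot_card w k hk]


lemma dyck_first (n m : ℕ) (hm : 0 < m) (w : List Bool) (hd : IsDyckPath n m w) :
    w[0]? = some true := by
  obtain ⟨hfree, hpre⟩ := (isDyck_iff_take n m w).mp hd
  match w with
  | [] =>
    exfalso
    have := length_eq n m [] hfree
    simp at this
    omega
  | a :: t =>
    have h1 := hpre 1 (Nat.succ_le_succ (Nat.zero_le _))
    have htake : List.take 1 (a :: t) = [a] := rfl
    rw [htake] at h1
    cases a
    · exfalso
      rw [ht] at h1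
      simp at h1
      omega
    · simp

lemma dyck_last (n m : ℕ) (hn : 0 < n) (hm : 0 < m) (w : List Bool) (hd : IsDyckPath n m w) :
    w[w.length - 1]? = some false := by
  obtain ⟨hfree, hpre⟩ := (isDyck_iff_take n m w).mp hd
  have hL : w.length = m + n := length_eq n m w hfree
  have hL1 : 0 < w.length := by omega
  obtain ⟨b, hb⟩ : ∃ b, w[w.length - 1]? = some b := by
    have : w.length - 1 < w.length := by omega
    exact ⟨w[w.length - 1], List.getElem?_eq_some_iff.mpr ⟨this, rfl⟩⟩
  have hdrop : w.drop (w.length - 1) = [b] := by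
    have hlen : (w.drop (w.length - 1)).length = 1 := by simp; omega
    obtain ⟨a, ha⟩ := List.length_eq_one_iff.mp hlen
    have : (w.drop (w.length - 1))[0]? = some a := by rw [ha]; rfl
    rw [List.getElem?_drop] at this
    simp only [Nat.add_zero] at this
    rw [hb] at this
    rw [ha]
    injection this with h
    rw [h]
  have hsplit : w.take (w.length - 1) ++ [b] = w := by
    rw [← hdrop, List.take_append_drop]
  have h0 : ht n m w = 0 := ht_eq_zero n m w hfree
  have h1 := hpre (w.length - 1) (by omega)
  have h2 : ht n m (w.take (w.length - 1)) + ht n m [b] = 0 := by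
    rw [← ht_append, hsplit, h0]
  cases b
  · exact hb
  · exfalso
    have hc : ht n m [true] = n := by simp [ht]
    rw [hc] at h2
    have : (0 : ℤ) < n := by exact_mod_cast hn
    linarith

/-- length of a `takeWhile` from explicit element information -/
lemma takeWhile_length_eq (p : Bool → Bool) (l : List Bool) (b : ℕ)
    (h1 : ∀ y, y < b → ∃ x, l[y]? = some x ∧ p x = true)
    (h2 : l.length = b ∨ ∃ x, l[b]? = some x ∧ p x = false) :
    (l.takeWhile p).length = b := by
  induction l generalizing b with
  | nil =>
    rcases b with _ | b'
    · simp
    · obtain ⟨x, hx, -⟩ := h1 0 (by omega)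
      simp at hx
  | cons a t ih =>
    rcases b with _ | b'
    · rcases h2 with h2 | ⟨x, hx, hpx⟩
      · simp at h2
      · simp only [List.getElem?_cons_zero, Option.some.injEq] at hx
        subst hx
        rw [List.takeWhile_cons_of_neg (by simp [hpx])]
        simp
    · obtain ⟨x, hx, hpx⟩ := h1 0 (by omega)
      simp only [List.getElem?_cons_zero, Option.some.injEq] at hx
      subst hx
      rw [List.takeWhile_cons_of_pos (by simp [hpx])]
      simp only [List.length_cons, Nat.add_left_inj]
      apply ih
      · intro y hy
        obtain ⟨z, hz, hpz⟩ := h1 (y + 1) (by omega)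
        rw [List.getElem?_cons_succ] at hz
        exact ⟨z, hz, hpz⟩
      · rcases h2 with h2 | ⟨z, hz, hpz⟩
        · left; simp at h2; omega
        · right
          rw [List.getElem?_cons_succ] at hz
          exact ⟨z, hz, hpz⟩

lemma takeWhile_stop (p : Bool → Bool) (l : List Bool)
    (h : (l.takeWhile p).length < l.length) :
    ∃ x, l[(l.takeWhile p).length]? = some x ∧ p x = false := by
  induction l with
  | nil => simp at h
  | cons a t ih =>
    cases hpa : p a
    · rw [List.takeWhile_cons_of_neg (by simp [hpa])] at h ⊢
      simp only [List.length_nil, List.getElem?_cons_zero]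
      exact ⟨a, rfl, hpa⟩
    · rw [List.takeWhile_cons_of_pos (by simp [hpa])] at h ⊢
      simp only [List.length_cons] at h ⊢
      obtain ⟨x, hx, hpx⟩ := ih (by omega)
      exact ⟨x, by rw [List.getElem?_cons_succ]; exact hx, hpx⟩

lemma takeWhile_elem (p : Bool → Bool) (l : List Bool) (y : ℕ)
    (hy : y < (l.takeWhile p).length) :
    ∃ x, l[y]? = some x ∧ p x = true := by
  have hpre : l.takeWhile p <+: l := List.takeWhile_prefix p
  obtain ⟨r, hr⟩ := hpre
  have h1 : (l.takeWhile p)[y]? = l[y]? := by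
    conv_rhs => rw [← hr]
    rw [List.getElem?_append, if_pos hy]
  obtain ⟨x, hx⟩ : ∃ x, (l.takeWhile p)[y]? = some x :=
    ⟨_, List.getElem?_eq_some_iff.mpr ⟨hy, rfl⟩⟩
  refine ⟨x, by rw [← h1, hx], ?_⟩
  have hmem : x ∈ l.takeWhile p := by
    have := List.getElem?_eq_some_iff.mp hx
    obtain ⟨hlt, he⟩ := this
    exact he ▸ List.getElem_mem hlt
  exact List.mem_takeWhile_imp hmem

/-- The cut position associated to a peak: skip past the run of `D`s following
the peak. -/
def cut (P : List Bool) (i : ℕ) : ℕ :=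
  i + 2 + ((P.drop (i + 2)).takeWhile (fun b => !b)).length

lemma cut_le (P : List Bool) (i : ℕ) (hi : i + 1 < P.length) : cut P i ≤ P.length := by
  have := (List.takeWhile_prefix (l := P.drop (i + 2)) (fun b => !b)).length_le
  rw [List.length_drop] at this
  rw [cut]
  omega

lemma lt_cut (P : List Bool) (i : ℕ) : i + 1 < cut P i := by rw [cut]; omega

lemma cut_false (P : List Bool) (i : ℕ) (hpk : IsPeakAt P i) (x : ℕ)
    (hx1 : i + 1 ≤ x) (hx2 : x < cut P i) : P[x]? = some false := by
  obtain ⟨t, hpk'⟩ := hpk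
  rcases Nat.eq_or_lt_of_le hx1 with h | h
  · have : (P.drop i)[1]? = some false := by rw [← hpk']; simp
    rw [List.getElem?_drop] at this
    rw [← h]
    exact this
  · obtain ⟨v, hv, hpv⟩ := takeWhile_elem (fun b => !b) (P.drop (i + 2)) (x - (i + 2))
      (by rw [cut] at hx2; omega)
    rw [List.getElem?_drop] at hv
    have hxe : i + 2 + (x - (i + 2)) = x := by omega
    rw [hxe] at hv
    have : v = false := by
      cases v
      · rfl
      · simp at hpv
    rw [this] at hv
    exact hv

lemma cut_end (P : List Bool) (i : ℕ) (hi : i + 1 < P.length) :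
    cut P i = P.length ∨ P[cut P i]? = some true := by
  rcases Nat.eq_or_lt_of_le (cut_le P i hi) with h | h
  · exact Or.inl h
  · right
    have hlen : ((P.drop (i + 2)).takeWhile (fun b => !b)).length < (P.drop (i + 2)).length := by
      rw [List.length_drop]
      rw [cut] at h
      omega
    obtain ⟨x, hx, hpx⟩ := takeWhile_stop (fun b => !b) (P.drop (i + 2)) hlen
    rw [List.getElem?_drop] at hx
    have : x = true := by
      cases x
      · simp at hpx
      · rfl
    rw [this] at hx
    rw [cut]
    exact hx

/-- characterization of `cut` needed for surjectivity -/
lemma cut_eq (P : List Bool) (i k : ℕ) (hik : i + 1 < k) (hkP : k ≤ P.length)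
    (hfalse : ∀ x, i + 1 ≤ x → x < k → P[x]? = some false)
    (hend : k = P.length ∨ P[k]? = some true) :
    cut P i = k := by
  rw [cut]
  have : ((P.drop (i + 2)).takeWhile (fun b => !b)).length = k - (i + 2) := by
    apply takeWhile_length_eq
    · intro y hy
      refine ⟨false, ?_, rfl⟩
      rw [List.getElem?_drop]
      exact hfalse (i + 2 + y) (by omega) (by omega)
    · rcases hend with h | h
      · left
        rw [List.length_drop]
        omega
      · right
        refine ⟨true, ?_, rfl⟩
        rw [List.getElem?_drop]
        have : i + 2 + (k - (i + 2)) = k := by omega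
        rw [this]
        exact h
  omega


/-! ### main bijection -/

def Psi : List Bool × ℕ → List Bool := fun Pp => rot (cut Pp.1 Pp.2) Pp.1

theorem main (n m j : ℕ) (hn : 0 < n) (hm : 0 < m) (hj : 0 < j)
    (h : Nat.gcd n m = 1) :
    {Pp : List Bool × ℕ |
        IsDyckPath n m Pp.1 ∧ numPeaks Pp.1 = j ∧ IsPeakAt Pp.1 Pp.2}.ncard =
      {w : List Bool | IsFreePath n m w ∧ numPeaks w = j ∧
        w.head? = some true ∧ w.getLast? = some false}.ncard := by
  set S1 : Set (List Bool × ℕ) :=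
    {Pp : List Bool × ℕ | IsDyckPath n m Pp.1 ∧ numPeaks Pp.1 = j ∧ IsPeakAt Pp.1 Pp.2} with hS1
  set S2 : Set (List Bool) :=
    {w : List Bool | IsFreePath n m w ∧ numPeaks w = j ∧
      w.head? = some true ∧ w.getLast? = some false} with hS2
  have hL0 : 0 < m + n := by omega
  -- basic facts about members of S1
  have hS1fact : ∀ P i, (P, i) ∈ S1 →
      P.length = m + n ∧ i + 1 < P.length ∧ P[i]? = some true ∧ P[i + 1]? = some false ∧
      i + 1 < cut P i ∧ cut P i ≤ P.length ∧
      P[0]? = some true ∧ P[P.length - 1]? = some false := by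
    rintro P i ⟨hdy, hnp, hpk⟩
    obtain ⟨h0, h1⟩ := (isPeakAt_iff P i).mp hpk
    have hlt : i + 1 < P.length := lt_of_getElem?_eq_some h1
    exact ⟨length_eq n m P hdy.1, hlt, h0, h1, lt_cut P i, cut_le P i hlt,
      dyck_first n m hm P hdy, dyck_last n m hn hm P hdy⟩
  -- value of rot at relevant indices
  have hrot_last : ∀ P i, (P, i) ∈ S1 →
      (rot (cut P i) P)[P.length - 1]? = some false := by
    rintro P i hmem
    obtain ⟨hlen, hlt, h0, h1, hc1, hc2, hh, hl⟩ := hS1fact P i hmem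
    set k := cut P i with hk
    rw [getElem?_rot k P hc2 (P.length - 1) (by omega)]
    have he : (P.length - 1 + k) % P.length = k - 1 := by
      have h2 : P.length - 1 + k = P.length + (k - 1) := by omega
      rw [h2, Nat.add_mod_left, Nat.mod_eq_of_lt (by omega)]
    rw [he]
    exact cut_false P i hmem.2.2 (k - 1) (by omega) (by omega)
  have hrot_head : ∀ P i, (P, i) ∈ S1 → (rot (cut P i) P)[0]? = some true := by
    rintro P i hmem
    obtain ⟨hlen, hlt, h0, h1, hc1, hc2, hh, hl⟩ := hS1fact P i hmem
    set k := cut P i with hk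
    rw [getElem?_rot k P hc2 0 (by omega)]
    rcases Nat.eq_or_lt_of_le hc2 with hcase | hcase
    · rw [Nat.zero_add, hcase, Nat.mod_self]
      exact hh
    · have he : (0 + k) % P.length = k := by
        rw [Nat.zero_add, Nat.mod_eq_of_lt hcase]
      rw [he]
      rcases cut_end P i hlt with hend | hend
      · omega
      · exact hend
  -- Psi maps S1 into S2
  have hmaps : ∀ P i, (P, i) ∈ S1 → Psi (P, i) ∈ S2 := by
    rintro P i hmem
    have hmem2 := hmem
    obtain ⟨hdy, hnp, hpk⟩ := hmem2
    obtain ⟨hlen, hlt, h0, h1, hc1, hc2, hh, hl⟩ := hS1fact P i hmem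
    set k := cut P i with hk
    have hfree : IsFreePath n m (rot k P) := isFreePath_rot n m k P hdy.1
    simp only [Psi]
    refine ⟨hfree, ?_, ?_, ?_⟩
    · rw [numPeaks_rot P k hc2 hl (hrot_last P i hmem)]
      exact hnp
    · rw [List.head?_eq_getElem?]
      exact hrot_head P i hmem
    · rw [List.getLast?_eq_getElem?, length_rot]
      exact hrot_last P i hmem
  -- injectivity
  have hinj : Set.InjOn Psi S1 := by
    rintro ⟨P, i⟩ hmem ⟨P', i'⟩ hmem' heq
    obtain ⟨hdy, hnp, hpk⟩ := hmem
    obtain ⟨hdy', hnp', hpk'⟩ := hmem'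
    obtain ⟨hlen, hlt, h0, h1, hc1, hc2, hh, hl⟩ := hS1fact P i ⟨hdy, hnp, hpk⟩
    obtain ⟨hlen', hlt', h0', h1', hc1', hc2', hh', hl'⟩ := hS1fact P' i' ⟨hdy', hnp', hpk'⟩
    set k := cut P i with hk
    set k' := cut P' i' with hk'
    simp only [Psi] at heq
    have hPw : rot ((rot k P).length - k) (rot k P) = P := by
      rw [length_rot]
      exact rot_rot_inv k P hc2
    have hPw' : rot ((rot k P).length - k') (rot k P) = P' := by
      rw [heq, length_rot]
      exact rot_rot_inv k' P' hc2'
    have hwfree : IsFreePath n m (rot k P) := isFreePath_rot n m k P hdy.1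
    have hwlen2 : (rot k P).length = m + n := by rw [length_rot, hlen]
    have hmin1 : MinAt n m (rot k P) ((rot k P).length - k) := by
      rw [← dyck_rot_iff n m _ hwfree _ (Nat.sub_le _ _), hPw]
      exact hdy
    have hmin2 : MinAt n m (rot k P) ((rot k P).length - k') := by
      rw [← dyck_rot_iff n m _ hwfree _ (Nat.sub_le _ _), hPw']
      exact hdy'
    have hkk : (rot k P).length - k = (rot k P).length - k' :=
      minAt_unique n m hn hm h (rot k P) hwfree _ _ (by omega) (by omega) hmin1 hmin2
    have hkeq : k = k' := by omega
    have hPeq : P = P' := by rw [← hPw, ← hPw', hkk]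
    subst hPeq
    have hieq : i = i' := by
      by_contra hne
      rcases Nat.lt_or_ge i i' with hlt2 | hge
      · have := cut_false P i hpk i' (by omega) (by omega)
        rw [this] at h0'
        simp at h0'
      · have hlt2 : i' < i := by omega
        have := cut_false P i' hpk' i (by omega) (by omega)
        rw [this] at h0
        simp at h0
    rw [hieq]
  -- surjectivity
  have hsurj : ∀ w ∈ S2, ∃ Pp ∈ S1, Psi Pp = w := by
    rintro w ⟨hwfree, hwnp, hwhd, hwlast⟩
    have hwlen : w.length = m + n := length_eq n m w hwfree
    obtain ⟨k0, hk0, hmin⟩ := exists_minAt n m w hwfree (by omega)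
    set P : List Bool := rot k0 w with hP
    have hPlen : P.length = m + n := by rw [hP, length_rot, hwlen]
    have hPdyck : IsDyckPath n m P :=
      (dyck_rot_iff n m w hwfree k0 (le_of_lt hk0)).mpr hmin
    have hPfree : IsFreePath n m P := hPdyck.1
    set k := w.length - k0 with hkdef
    have hk1 : 1 ≤ k := by omega
    have hk2 : k ≤ P.length := by omega
    have hwP : rot k P = w := by
      rw [hP, hkdef]
      exact rot_rot_inv k0 w (le_of_lt hk0)
    have hPfirst : P[0]? = some true := dyck_first n m hm P hPdyck
    have hPlast : P[P.length - 1]? = some false := dyck_last n m hn hm P hPdyck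
    have hget : ∀ x, x < P.length → w[x]? = P[(x + k) % P.length]? := by
      intro x hx
      rw [← hwP, getElem?_rot k P hk2 x hx]
    have hkm1 : P[k - 1]? = some false := by
      have hx : w[w.length - 1]? = some false := by
        rw [← List.getLast?_eq_getElem?]
        exact hwlast
      rw [hget (w.length - 1) (by omega)] at hx
      have he : (w.length - 1 + k) % P.length = k - 1 := by
        have h2 : w.length - 1 + k = P.length + (k - 1) := by omega
        rw [h2, Nat.add_mod_left, Nat.mod_eq_of_lt (by omega)]
      rwa [he] at hx
    have hwfirst : k = P.length ∨ P[k]? = some true := by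
      rcases Nat.eq_or_lt_of_le hk2 with hcase | hcase
      · exact Or.inl hcase
      · right
        have hx : w[0]? = some true := by
          rw [← List.head?_eq_getElem?]
          exact hwhd
        rw [hget 0 (by omega)] at hx
        rwa [Nat.zero_add, Nat.mod_eq_of_lt hcase] at hx
    -- find the peak position
    set Q : ℕ → Prop := fun t => P[t]? = some true with hQ
    have hQdec : DecidablePred Q := fun t => inferInstanceAs (Decidable (_ = _))
    set i := Nat.findGreatest Q (k - 1) with hi
    have hQi : Q i := Nat.findGreatest_spec (Nat.zero_le _) hPfirst
    have hile : i ≤ k - 1 := Nat.findGreatest_le _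
    have hmax : ∀ x, i < x → x ≤ k - 1 → P[x]? = some false := by
      intro x hx1 hx2
      have hnq : ¬ Q x := Nat.findGreatest_is_greatest hx1 hx2
      obtain ⟨b, hb⟩ : ∃ b, P[x]? = some b := by
        have hxl : x < P.length := by omega
        exact ⟨P[x], List.getElem?_eq_some_iff.mpr ⟨hxl, rfl⟩⟩
      cases b
      · exact hb
      · exact absurd hb hnq
    have hik : i < k - 1 := by
      rcases Nat.eq_or_lt_of_le hile with hcase | hcase
      · exfalso
        rw [hQ] at hQi
        rw [hcase] at hQi
        rw [hkm1] at hQi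
        simp at hQi
      · exact hcase
    have hpk : IsPeakAt P i := by
      rw [isPeakAt_iff]
      exact ⟨hQi, hmax (i + 1) (by omega) (by omega)⟩
    have hcutP : cut P i = k := by
      apply cut_eq P i k (by omega) hk2
      · intro x hx1 hx2
        rcases Nat.eq_or_lt_of_le hx1 with hcase | hcase
        · rw [← hcase]
          exact hmax (i + 1) (by omega) (by omega)
        · exact hmax x (by omega) (by omega)
      · exact hwfirst
    have hrotlast : (rot k P)[P.length - 1]? = some false := by
      rw [hwP]
      have he : P.length - 1 = w.length - 1 := by omega
      rw [he, ← List.getLast?_eq_getElem?]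
      exact hwlast
    have hnpP : numPeaks P = j := by
      have h2 := numPeaks_rot P k hk2 hPlast hrotlast
      rw [hwP] at h2
      rw [h2] at hwnp
      exact hwnp
    exact ⟨(P, i), ⟨hPdyck, hnpP, hpk⟩, by simp only [Psi]; rw [hcutP]; exact hwP⟩
  have himg : Psi '' S1 = S2 := by
    apply Set.Subset.antisymm
    · rintro x ⟨⟨P, i⟩, hmem, rfl⟩
      exact hmaps P i hmem
    · intro w hw
      obtain ⟨Pp, hPp, hPpw⟩ := hsurj w hw
      exact ⟨Pp, hPp, hPpw⟩
  rw [← himg]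
  exact (Set.ncard_image_of_injOn hinj).symm

end StmtAux

/-- For `gcd(n,m) = 1`: the number of pairs `(P, p)` with `P` an `(n,m)`-Dyck path
with exactly `j` peaks and `p` a peak of `P` equals the number of free `(n,m)`-paths
with exactly `j` peaks that begin with `U` and end with `D`. -/
theorem stmt9 (n m j : ℕ) (hn : 0 < n) (hm : 0 < m) (hj : 0 < j)
    (h : Nat.gcd n m = 1) :
    {Pp : List Bool × ℕ |
        IsDyckPath n m Pp.1 ∧ numPeaks Pp.1 = j ∧ IsPeakAt Pp.1 Pp.2}.ncard =
      {w : List Bool | IsFreePath n m w ∧ numPeaks w = j ∧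
        w.head? = some true ∧ w.getLast? = some false}.ncard := by
  exact StmtAux.main n m j hn hm hj h
end

section
/- Let n, m be positive integers and j a natural number. The number of free (n,m)-paths with exactly j peaks equals binomial(n, j)·binomial(m, j). -/
/- ### Auxiliary lemmas about peak sets -/

lemma peakSet_subset (w : List Bool) : {i : ℕ | IsPeakAt w i} ⊆ Set.Iio w.length := by
  intro i hi
  simp only [Set.mem_setOf_eq, IsPeakAt] at hi
  have h := hi.length_le
  simp only [List.length_drop, List.length_cons, List.length_singleton] at h
  simp only [Set.mem_Iio]
  omega

lemma peakSet_finite (w : List Bool) : {i : ℕ | IsPeakAt w i}.Finite :=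
  (Set.finite_Iio _).subset (peakSet_subset w)

lemma numPeaks_nil : numPeaks [] = 0 := by
  have : {i : ℕ | IsPeakAt [] i} = ∅ := by
    ext i; simp [IsPeakAt]
  simp [numPeaks, this]

lemma peakAt_succ_cons (b : Bool) (t : List Bool) (i : ℕ) :
    IsPeakAt (b :: t) (i + 1) ↔ IsPeakAt t i := by
  simp [IsPeakAt]

lemma numPeaks_cons_false (t : List Bool) : numPeaks (false :: t) = numPeaks t := by
  have himg : {i : ℕ | IsPeakAt (false :: t) i} = (· + 1) '' {i : ℕ | IsPeakAt t i} := by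
    ext i
    constructor
    · intro hi
      rcases i with _ | k
      · rcases hi with ⟨r, hr⟩
        simp at hr
      · exact ⟨k, (peakAt_succ_cons false t k).mp hi, rfl⟩
    · rintro ⟨k, hk, rfl⟩
      exact (peakAt_succ_cons false t k).mpr hk
  rw [numPeaks, himg, Set.ncard_image_of_injective _ (add_left_injective 1)]
  rfl

lemma numPeaks_cons_true (t : List Bool) :
    numPeaks (true :: t) = numPeaks t + (if t.head? = some false then 1 else 0) := by
  by_cases h : t.head? = some false
  · rcases t with _ | ⟨b, t'⟩
    · simp at h
    · simp only [List.head?_cons, Option.some.injEq] at h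
      subst h
      have himg : {i : ℕ | IsPeakAt (true :: false :: t') i}
          = insert 0 ((· + 1) '' {i : ℕ | IsPeakAt (false :: t') i}) := by
        ext i
        constructor
        · intro hi
          rcases i with _ | k
          · exact Set.mem_insert _ _
          · exact Set.mem_insert_of_mem _ ⟨k, (peakAt_succ_cons _ _ k).mp hi, rfl⟩
        · rintro (rfl | ⟨k, hk, rfl⟩)
          · exact ⟨t', rfl⟩
          · exact (peakAt_succ_cons _ _ k).mpr hk
      rw [numPeaks, himg, Set.ncard_insert_of_notMem (by rintro ⟨k, _, hk⟩; simp at hk)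
        (((peakSet_finite (false :: t')).image _)),
        Set.ncard_image_of_injective _ (add_left_injective 1)]
      simp [numPeaks]
  · have himg : {i : ℕ | IsPeakAt (true :: t) i} = (· + 1) '' {i : ℕ | IsPeakAt t i} := by
      ext i
      constructor
      · intro hi
        rcases i with _ | k
        · rcases hi with ⟨r, hr⟩
          simp only [List.drop_zero, List.cons_append, List.cons.injEq] at hr
          exact absurd (by rw [← hr.2]; simp) h
        · exact ⟨k, (peakAt_succ_cons true t k).mp hi, rfl⟩
      · rintro ⟨k, hk, rfl⟩
        exact (peakAt_succ_cons true t k).mpr hk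
    rw [numPeaks, himg, Set.ncard_image_of_injective _ (add_left_injective 1), if_neg h]
    rfl

/- ### The sets of words -/

def Stot (n m j : ℕ) : Set (List Bool) := {w | IsFreePath n m w ∧ numPeaks w = j}

def Shd (n m j : ℕ) (o : Option Bool) : Set (List Bool) := {w ∈ Stot n m j | w.head? = o}

lemma Stot_finite (n m j : ℕ) : (Stot n m j).Finite := by
  apply (List.finite_length_eq Bool (m + n)).subset
  rintro w ⟨⟨h1, h2⟩, _⟩
  simp only [Set.mem_setOf_eq]
  rw [← h1, ← h2, List.count_true_add_count_false]

lemma Shd_finite (n m j : ℕ) (o : Option Bool) : (Shd n m j o).Finite :=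
  (Stot_finite n m j).subset (fun _ h => h.1)

/-- Generic split of a finite set of words by the head. -/
lemma ncard_split (S : Set (List Bool)) (hS : S.Finite) :
    S.ncard = {w ∈ S | w.head? = some false}.ncard + {w ∈ S | w.head? = some true}.ncard
      + {w ∈ S | w.head? = none}.ncard := by
  have hd1 : Disjoint {w ∈ S | w.head? = some false} {w ∈ S | w.head? = some true} := by
    rw [Set.disjoint_left]; rintro w ⟨_, h1⟩ ⟨_, h2⟩; rw [h1] at h2; simp at h2
  have hd2 : Disjoint ({w ∈ S | w.head? = some false} ∪ {w ∈ S | w.head? = some true})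
      {w ∈ S | w.head? = none} := by
    rw [Set.disjoint_left]
    rintro w (⟨_, h1⟩ | ⟨_, h1⟩) ⟨_, h2⟩ <;> rw [h1] at h2 <;> simp at h2
  have hU : S = ({w ∈ S | w.head? = some false} ∪ {w ∈ S | w.head? = some true})
      ∪ {w ∈ S | w.head? = none} := by
    ext w
    simp only [Set.mem_union, Set.mem_setOf_eq]
    constructor
    · intro hw
      rcases h : w.head? with _ | b
      · exact Or.inr ⟨hw, rfl⟩
      · cases b
        · exact Or.inl (Or.inl ⟨hw, rfl⟩)
        · exact Or.inl (Or.inr ⟨hw, rfl⟩)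
    · rintro ((⟨h, _⟩ | ⟨h, _⟩) | ⟨h, _⟩) <;> exact h
  conv_lhs => rw [hU]
  rw [Set.ncard_union_eq hd2 ((hS.subset (fun _ h => h.1)).union (hS.subset (fun _ h => h.1)))
      (hS.subset (fun _ h => h.1)),
    Set.ncard_union_eq hd1 (hS.subset (fun _ h => h.1)) (hS.subset (fun _ h => h.1))]

lemma Stot_split (n m j : ℕ) :
    (Stot n m j).ncard = (Shd n m j (some false)).ncard + (Shd n m j (some true)).ncard
      + (Shd n m j none).ncard :=
  ncard_split _ (Stot_finite n m j)

lemma Shd_none_ncard (n m j : ℕ) :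
    (Shd n m j none).ncard = if n = 0 ∧ m = 0 ∧ j = 0 then 1 else 0 := by
  by_cases h : n = 0 ∧ m = 0 ∧ j = 0
  · obtain ⟨rfl, rfl, rfl⟩ := h
    rw [if_pos ⟨rfl, rfl, rfl⟩]
    have : Shd 0 0 0 none = {([] : List Bool)} := by
      ext w
      simp only [Shd, Stot, IsFreePath, Set.mem_setOf_eq, Set.mem_singleton_iff,
        List.head?_eq_none_iff]
      constructor
      · rintro ⟨_, h⟩; exact h
      · rintro rfl; exact ⟨⟨⟨rfl, rfl⟩, numPeaks_nil⟩, rfl⟩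
    rw [this, Set.ncard_singleton]
  · rw [if_neg h]
    have : Shd n m j none = ∅ := by
      ext w
      simp only [Shd, Stot, IsFreePath, Set.mem_setOf_eq, Set.mem_empty_iff_false,
        iff_false, List.head?_eq_none_iff, not_and]
      rintro ⟨⟨h1, h2⟩, h3⟩ rfl
      simp only [List.count_nil] at h1 h2
      exact h ⟨h2.symm, h1.symm, by rw [← h3, numPeaks_nil]⟩
    rw [this, Set.ncard_empty]

lemma Shd_false_zero (m j : ℕ) : Shd 0 m j (some false) = ∅ := by
  ext w
  simp only [Shd, Stot, IsFreePath, Set.mem_setOf_eq, Set.mem_empty_iff_false, iff_false, not_and]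
  rintro ⟨⟨_, h2⟩, _⟩ hh
  rcases w with _ | ⟨b, t⟩
  · simp at hh
  · simp only [List.head?_cons, Option.some.injEq] at hh
    subst hh
    simp at h2

lemma Shd_true_zero (n j : ℕ) : Shd n 0 j (some true) = ∅ := by
  ext w
  simp only [Shd, Stot, IsFreePath, Set.mem_setOf_eq, Set.mem_empty_iff_false, iff_false, not_and]
  rintro ⟨⟨h1, _⟩, _⟩ hh
  rcases w with _ | ⟨b, t⟩
  · simp at hh
  · simp only [List.head?_cons, Option.some.injEq] at hh
    subst hh
    simp at h1

lemma Shd_false_ncard (n m j : ℕ) :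
    (Shd (n + 1) m j (some false)).ncard = (Stot n m j).ncard := by
  have himg : Shd (n + 1) m j (some false) = (false :: ·) '' Stot n m j := by
    ext w
    simp only [Shd, Stot, IsFreePath, Set.mem_setOf_eq, Set.mem_image]
    constructor
    · rintro ⟨⟨⟨h1, h2⟩, h3⟩, hh⟩
      rcases w with _ | ⟨b, t⟩
      · simp at hh
      · simp only [List.head?_cons, Option.some.injEq] at hh
        subst hh
        refine ⟨t, ⟨⟨?_, ?_⟩, ?_⟩, rfl⟩
        · simpa using h1
        · simp only [List.count_cons_self] at h2; omega
        · rw [← h3, numPeaks_cons_false]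
    · rintro ⟨t, ⟨⟨h1, h2⟩, h3⟩, rfl⟩
      refine ⟨⟨⟨by simpa using h1, by simp [h2]⟩, by rw [numPeaks_cons_false, h3]⟩, rfl⟩
  rw [himg, Set.ncard_image_of_injective _ (List.cons_injective)]

lemma Shd_true_ncard (n m j : ℕ) :
    (Shd n (m + 1) j (some true)).ncard
      = (if j = 0 then 0 else (Shd n m (j - 1) (some false)).ncard)
        + (Shd n m j (some true)).ncard + (Shd n m j none).ncard := by
  set T : Set (List Bool) :=
    {t | IsFreePath n m t ∧ numPeaks t + (if t.head? = some false then 1 else 0) = j} with hT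
  have hTfin : T.Finite := by
    apply (List.finite_length_eq Bool (m + n)).subset
    rintro w ⟨⟨h1, h2⟩, _⟩
    simp only [Set.mem_setOf_eq]
    rw [← h1, ← h2, List.count_true_add_count_false]
  have himg : Shd n (m + 1) j (some true) = (true :: ·) '' T := by
    ext w
    simp only [Shd, Stot, IsFreePath, Set.mem_setOf_eq, Set.mem_image, hT]
    constructor
    · rintro ⟨⟨⟨h1, h2⟩, h3⟩, hh⟩
      rcases w with _ | ⟨b, t⟩
      · simp at hh
      · simp only [List.head?_cons, Option.some.injEq] at hh
        subst hh
        refine ⟨t, ⟨⟨?_, ?_⟩, ?_⟩, rfl⟩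
        · simp only [List.count_cons_self] at h1; omega
        · simpa using h2
        · rw [← h3, numPeaks_cons_true]
    · rintro ⟨t, ⟨⟨h1, h2⟩, h3⟩, rfl⟩
      refine ⟨⟨⟨by simp [h1], by simpa using h2⟩, by rw [numPeaks_cons_true, h3]⟩, rfl⟩
  rw [himg, Set.ncard_image_of_injective _ (List.cons_injective), ncard_split T hTfin]
  congr 2
  · -- head false fiber
    by_cases hj : j = 0
    · subst hj
      rw [if_pos rfl]
      have : {t ∈ T | t.head? = some false} = ∅ := by
        ext t
        simp only [Set.mem_setOf_eq, Set.mem_empty_iff_false, iff_false, not_and, hT]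
        rintro ⟨_, h3⟩ hh
        rw [if_pos hh] at h3
        omega
      rw [this, Set.ncard_empty]
    · rw [if_neg hj]
      congr 1
      ext t
      simp only [Set.mem_setOf_eq, Shd, Stot, hT]
      constructor
      · rintro ⟨⟨h1, h3⟩, hh⟩
        rw [if_pos hh] at h3
        exact ⟨⟨h1, by omega⟩, hh⟩
      · rintro ⟨⟨h1, h3⟩, hh⟩
        exact ⟨⟨h1, by rw [if_pos hh]; omega⟩, hh⟩
  · congr 1
    ext t
    simp only [Set.mem_setOf_eq, Shd, Stot, hT]
    constructor
    · rintro ⟨⟨h1, h3⟩, hh⟩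
      rw [if_neg (by rw [hh]; simp)] at h3
      exact ⟨⟨h1, by omega⟩, hh⟩
    · rintro ⟨⟨h1, h3⟩, hh⟩
      exact ⟨⟨h1, by rw [if_neg (by rw [hh]; simp)]; omega⟩, hh⟩
  · congr 1
    ext t
    simp only [Set.mem_setOf_eq, Shd, Stot, hT]
    constructor
    · rintro ⟨⟨h1, h3⟩, hh⟩
      rw [if_neg (by rw [hh]; simp)] at h3
      exact ⟨⟨h1, by omega⟩, hh⟩
    · rintro ⟨⟨h1, h3⟩, hh⟩
      exact ⟨⟨h1, by rw [if_neg (by rw [hh]; simp)]; omega⟩, hh⟩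

/- ### The closed form for words starting with `true` -/

def BF : ℕ → ℕ → ℕ → ℕ
  | _, 0, _ => 0
  | 0, _ + 1, 0 => 1
  | 0, _ + 1, _ + 1 => 0
  | _ + 1, _ + 1, 0 => 0
  | n + 1, m + 1, j + 1 => n.choose j * (m + 1).choose (j + 1)

lemma BF_m0 (n j : ℕ) : BF n 0 j = 0 := by
  rcases n with _ | n <;> rcases j with _ | j <;> rfl

lemma BF_succ_j0 (n m : ℕ) : BF (n + 1) m 0 = 0 := by
  rcases m with _ | m <;> rfl

lemma BF_zero (m j : ℕ) : BF 0 m j = if j = 0 ∧ m ≠ 0 then 1 else 0 := by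
  rcases m with _ | m <;> rcases j with _ | j <;> simp [BF]

lemma BF_succ (n m j : ℕ) : BF (n + 1) m (j + 1) = n.choose j * m.choose (j + 1) := by
  rcases m with _ | m <;> simp [BF]

/- ### The main induction -/

lemma main_ind (k : ℕ) : ∀ n m j : ℕ, n + m ≤ k →
    (Stot n m j).ncard = n.choose j * m.choose j ∧ (Shd n m j (some true)).ncard = BF n m j := by
  induction k with
  | zero =>
    intro n m j h
    obtain ⟨rfl, rfl⟩ : n = 0 ∧ m = 0 := by omega
    constructor
    · rw [Stot_split, Shd_false_zero, Shd_true_zero, Set.ncard_empty, Shd_none_ncard]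
      rcases j with _ | j <;> simp [BF, Nat.choose]
    · rw [Shd_true_zero, Set.ncard_empty, BF_m0]
  | succ k ih =>
    intro n m j h
    by_cases hk : n + m ≤ k
    · exact ih n m j hk
    have hnm : n + m = k + 1 := by omega
    -- first the head-true part
    have hU : (Shd n m j (some true)).ncard = BF n m j := by
      rcases m with _ | m'
      · rw [Shd_true_zero, Set.ncard_empty, BF_m0]
      · have hm' : n + m' ≤ k := by omega
        rw [Shd_true_ncard, Shd_none_ncard]
        have hTU : (Shd n m' j (some true)).ncard = BF n m' j := (ih n m' j hm').2
        have hTD : ∀ j', (Shd n m' j' (some false)).ncard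
            = if n = 0 then 0 else (n - 1).choose j' * m'.choose j' := by
          intro j'
          rcases n with _ | n'
          · rw [Shd_false_zero, Set.ncard_empty, if_pos rfl]
          · rw [Shd_false_ncard, if_neg (by omega)]
            simpa using (ih n' m' j' (by omega)).1
        rw [hTU, hTD]
        rcases j with _ | j'
        · rw [if_pos rfl]
          rcases n with _ | n'
          · rw [BF_zero, BF_zero]
            rcases m' with _ | m'' <;> simp
          · rw [BF_succ_j0, BF_succ_j0, if_neg (by omega)]
        · rw [if_neg (Nat.succ_ne_zero j'), Nat.add_sub_cancel,
            if_neg (by omega : ¬(n = 0 ∧ m' = 0 ∧ j' + 1 = 0)), add_zero]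
          rcases n with _ | n'
          · rw [if_pos rfl, BF_zero, BF_zero]
            simp
          · rw [if_neg (Nat.succ_ne_zero n'), Nat.add_sub_cancel, BF_succ, BF_succ,
              ← Nat.mul_add, ← Nat.choose_succ_succ']
    refine ⟨?_, hU⟩
    rw [Stot_split, Shd_none_ncard, hU]
    rcases n with _ | n'
    · rw [Shd_false_zero, Set.ncard_empty, BF_zero]
      rcases m with _ | m' <;> rcases j with _ | j' <;> simp [Nat.choose]
    · rw [Shd_false_ncard, (ih n' m j (by omega)).1,
        if_neg (by omega : ¬(n' + 1 = 0 ∧ m = 0 ∧ j = 0)), add_zero]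
      rcases j with _ | j'
      · rw [BF_succ_j0]
        simp [Nat.choose]
      · rw [BF_succ, Nat.choose_succ_succ']
        ring

/-- The number of free `(n,m)`-paths with exactly `j` peaks is `C(n,j)·C(m,j)`. -/
theorem stmt10 (n m : ℕ) (hn : 0 < n) (hm : 0 < m) (j : ℕ) :
    {w : List Bool | IsFreePath n m w ∧ numPeaks w = j}.ncard =
      n.choose j * m.choose j := by
  exact (main_ind (n + m) n m j le_rfl).1
end

section
/- Let n, m, j be positive integers. The number of free (n,m)-paths with exactly j peaks that begin with an up step U and end with a down step D equals binomial(n−1, j−1)·binomial(m−1, j−1). -/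
theorem IsFreePath.length_eq {n m : ℕ} {w : List Bool} (h : IsFreePath n m w) :
    w.length = n + m := by
  rw [← List.count_false_add_count_true, h.1, h.2]

theorem IsPeakAt.lt_length {w : List Bool} {i : ℕ} (h : IsPeakAt w i) : i < w.length := by
  have := h.length_le
  simp only [List.length_drop, List.length_cons, List.length_nil] at this
  omega

theorem isPeakAt_cons_succ (b : Bool) (v : List Bool) (i : ℕ) :
    IsPeakAt (b :: v) (i + 1) ↔ IsPeakAt v i := by
  simp [IsPeakAt]

theorem isPeakAt_cons_zero (b : Bool) (v : List Bool) :
    IsPeakAt (b :: v) 0 ↔ b = true ∧ v.head? = some false := by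
  rcases v with _ | ⟨c, t⟩ <;> simp [IsPeakAt]

open Classical in
theorem numPeaks_eq_card_filter (w : List Bool) :
    numPeaks w = ((Finset.range w.length).filter (IsPeakAt w)).card := by
  rw [numPeaks, ← Set.ncard_coe_finset]
  congr 1
  ext i
  simpa using IsPeakAt.lt_length

theorem numPeaks_cons (b : Bool) (v : List Bool) :
    numPeaks (b :: v) = numPeaks v + if b = true ∧ v.head? = some false then 1 else 0 := by
  classical
  simp only [numPeaks_eq_card_filter, Finset.card_filter, List.length_cons,
    Finset.sum_range_succ', isPeakAt_cons_succ, isPeakAt_cons_zero]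

theorem numPeaks_eq_zero_of_true_notMem {w : List Bool} (h : true ∉ w) : numPeaks w = 0 := by
  have : {i | IsPeakAt w i} = ∅ :=
    Set.eq_empty_of_forall_notMem fun i hi => h (List.mem_of_mem_drop (hi.subset (by simp)))
  rw [numPeaks, this, Set.ncard_empty]

theorem numPeaks_pos {w : List Bool} (ht : true ∈ w) (hl : w.getLast? = some false) :
    0 < numPeaks w := by
  induction w with
  | nil => simp at ht
  | cons a v ih =>
    rcases v with _ | ⟨c, t⟩
    · simp_all
    rw [numPeaks_cons]
    rcases a <;> rcases c <;> simp_all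

def pathsStartingWith (b : Bool) (n m j : ℕ) : Set (List Bool) :=
  {w | IsFreePath n m w ∧ numPeaks w = j ∧ w.head? = some b ∧ w.getLast? = some false}

theorem pathsStartingWith_finite (b : Bool) (n m j : ℕ) : (pathsStartingWith b n m j).Finite :=
  (List.finite_length_eq Bool (n + m)).subset fun _ hw => hw.1.length_eq

theorem pathsStartingWith_true_no_up (n j : ℕ) : pathsStartingWith true n 0 j = ∅ := by
  refine Set.eq_empty_of_forall_notMem fun w ⟨⟨hU, _⟩, _, hh, _⟩ => ?_
  rcases w with _ | ⟨a, v⟩ <;> simp_all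

theorem pathsStartingWith_no_down (b : Bool) (m j : ℕ) : pathsStartingWith b 0 m j = ∅ := by
  refine Set.eq_empty_of_forall_notMem fun w ⟨⟨_, hD⟩, _, _, hl⟩ => ?_
  rw [List.count_eq_zero] at hD
  exact hD (List.mem_of_getLast? hl)

theorem pathsStartingWith_no_peaks (b : Bool) (n m : ℕ) :
    pathsStartingWith b n (m + 1) 0 = ∅ := by
  refine Set.eq_empty_of_forall_notMem fun w ⟨⟨hU, _⟩, hp, _, hl⟩ => ?_
  have := numPeaks_pos (List.count_pos_iff.mp (by omega)) hl
  omega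

theorem pathsStartingWith_false_no_up (n j : ℕ) :
    pathsStartingWith false (n + 1) 0 j =
      if j = 0 then {List.replicate (n + 1) false} else ∅ := by
  have hnoU {w : List Bool} (hU : w.count true = 0) : true ∉ w := List.count_eq_zero.mp hU
  ext w
  split_ifs with hj
  · constructor
    · rintro ⟨hw, -⟩
      refine List.eq_replicate_iff.mpr ⟨hw.length_eq, fun b hb => ?_⟩
      exact Bool.eq_false_iff.mpr fun h => hnoU hw.1 (h ▸ hb)
    · rintro rfl
      simp [pathsStartingWith, IsFreePath, List.count_replicate, List.head?_replicate,
        List.getLast?_replicate, hj, numPeaks_eq_zero_of_true_notMem]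
  · refine iff_of_false (fun ⟨hw, hp, _⟩ => hj ?_) id
    exact hp ▸ numPeaks_eq_zero_of_true_notMem (hnoU hw.1)

theorem pathsStartingWith_true_succ (n m j : ℕ) :
    pathsStartingWith true n (m + 1) (j + 1) =
      (true :: ·) '' (pathsStartingWith true n m (j + 1) ∪ pathsStartingWith false n m j) := by
  ext (_ | ⟨a, _ | ⟨c, t⟩⟩)
  · simp [pathsStartingWith]
  · cases a <;> simp [pathsStartingWith, IsFreePath]
  · cases a <;> cases c <;> simp [pathsStartingWith, IsFreePath, numPeaks_cons]

theorem pathsStartingWith_false_succ (n m j : ℕ) :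
    pathsStartingWith false (n + 1) (m + 1) j =
      (false :: ·) '' (pathsStartingWith true n (m + 1) j ∪
        pathsStartingWith false n (m + 1) j) := by
  ext (_ | ⟨a, _ | ⟨c, t⟩⟩)
  · simp [pathsStartingWith]
  · cases a <;> simp [pathsStartingWith, IsFreePath]
  · cases a <;> cases c <;> simp [pathsStartingWith, IsFreePath, numPeaks_cons]

theorem ncard_cons_image_pathsStartingWith_union (a : Bool) (n m j j' : ℕ) :
    ((a :: ·) '' (pathsStartingWith true n m j ∪ pathsStartingWith false n m j')).ncard =
      (pathsStartingWith true n m j).ncard + (pathsStartingWith false n m j').ncard := by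
  rw [Set.ncard_image_of_injective _ List.cons_injective,
    Set.ncard_union_eq _ (pathsStartingWith_finite ..) (pathsStartingWith_finite ..)]
  exact Set.disjoint_left.mpr fun _ ⟨_, _, hU, _⟩ ⟨_, _, hD, _⟩ => by simp [hU] at hD

theorem ncard_pathsStartingWith_false_of_true (m : ℕ)
    (htrue : ∀ n j, (pathsStartingWith true (n + 1) (m + 1) (j + 1)).ncard =
      n.choose j * m.choose j) (n j : ℕ) :
    (pathsStartingWith false (n + 1) (m + 1) (j + 1)).ncard = n.choose (j + 1) * m.choose j := by
  induction n with
  | zero => simp [pathsStartingWith_false_succ, pathsStartingWith_no_down]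
  | succ n ih =>
    rw [pathsStartingWith_false_succ, ncard_cons_image_pathsStartingWith_union, htrue, ih,
      Nat.choose_succ_succ' n]
    ring

theorem ncard_pathsStartingWith_true (n m j : ℕ) :
    (pathsStartingWith true (n + 1) (m + 1) (j + 1)).ncard = n.choose j * m.choose j := by
  induction m generalizing n j with
  | zero =>
    rw [pathsStartingWith_true_succ, ncard_cons_image_pathsStartingWith_union,
      pathsStartingWith_true_no_up, pathsStartingWith_false_no_up]
    cases j <;> simp
  | succ m ih =>
    rw [pathsStartingWith_true_succ, ncard_cons_image_pathsStartingWith_union, ih]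
    rcases j with _ | j
    · simp [pathsStartingWith_no_peaks]
    · rw [ncard_pathsStartingWith_false_of_true m ih, Nat.choose_succ_succ' m]
      ring

/-- The number of free `(n,m)`-paths with exactly `j` peaks that begin with an up step
and end with a down step is `C(n−1, j−1)·C(m−1, j−1)`. -/
theorem stmt11 (n m j : ℕ) (hn : 0 < n) (hm : 0 < m) (hj : 0 < j) :
    {w : List Bool | IsFreePath n m w ∧ numPeaks w = j ∧
        w.head? = some true ∧ w.getLast? = some false}.ncard =
      (n - 1).choose (j - 1) * (m - 1).choose (j - 1) := by
  obtain ⟨n, rfl⟩ := Nat.exists_eq_add_one_of_ne_zero hn.ne'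
  obtain ⟨m, rfl⟩ := Nat.exists_eq_add_one_of_ne_zero hm.ne'
  obtain ⟨j, rfl⟩ := Nat.exists_eq_add_one_of_ne_zero hj.ne'
  exact ncard_pathsStartingWith_true n m j
end

section
/- Let k, n, j be positive integers. The number of k-ary paths of order (k+1)n with exactly j peaks equals (1/j)·binomial(n−1, j−1)·binomial(kn, j−1); equivalently, j times the number of k-ary paths of order (k+1)n with exactly j peaks equals binomial(n−1, j−1)·binomial(kn, j−1). -/
/-- A `k`-ary path of order `(k+1)n`: a word over `{U, D}` (here `true` = `U`, with
displacement `(1,k)`, and `false` = `D`, with displacement `(1,−1)`) with exactly `n`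
letters `U` and `kn` letters `D`, such that every partial sum has nonnegative
`y`-coordinate (the path then automatically ends at `((k+1)n, 0)`). -/
def IsKaryPath (k n : ℕ) (w : List Bool) : Prop :=
  w.count true = n ∧ w.count false = k * n ∧
    ∀ p : List Bool, p <+: w → (p.count false : ℤ) ≤ (k : ℤ) * p.count true

/-!
Cut a word into maximal blocks `U^a D^b`: a path with `j` peaks is a list of `j` blocks with all
`a, b ≥ 1`. Appending one more `D` to the path turns the `a`'s and `b`'s into compositions of `n`
and of `kn + 1` into `j` parts, and such a pair of compositions comes from a path exactly when all
proper prefixes of its block list have nonnegative height. The whole block list has height `-1`,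
so by the cycle lemma exactly one of its `j` cyclic rotations has this property. Hence `j` times
the number of paths is the number of pairs of compositions, `C(n-1, j-1) · C(kn, j-1)`.
-/

namespace KaryPath

open List

section Words

variable {k : ℕ}

def height (k : ℕ) (w : List Bool) : ℤ := k * w.count true - w.count false

@[simp] lemma height_nil : height k [] = 0 := by simp [height]

@[simp] lemma height_append (u v : List Bool) : height k (u ++ v) = height k u + height k v := by
  simp only [height, count_append]; push_cast; ring

@[simp] lemma height_replicate_true (a : ℕ) : height k (replicate a true) = k * a := by
  simp [height, count_replicate]

@[simp] lemma height_replicate_false (b : ℕ) : height k (replicate b false) = -b := by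
  simp [height, count_replicate]

lemma isKaryPath_iff {n : ℕ} {w : List Bool} :
    IsKaryPath k n w ↔
      w.count true = n ∧ w.count false = k * n ∧ ∀ p, p <+: w → 0 ≤ height k p := by
  simp only [IsKaryPath, height, sub_nonneg]

namespace IsKaryPath

variable {n : ℕ} {w : List Bool}

lemma height_eq_zero (h : IsKaryPath k n w) : height k w = 0 := by
  simp [height, h.1, h.2.1]

lemma head?_ne (h : IsKaryPath k n w) : w.head? ≠ some false := by
  intro hw
  obtain ⟨t, rfl⟩ := head?_eq_some_iff.1 hw
  have := (isKaryPath_iff.1 h).2.2 [false] (by simp)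
  simp [height] at this

lemma getLast?_ne (hk : 0 < k) (h : IsKaryPath k n w) : w.getLast? ≠ some true := by
  intro hw
  obtain ⟨t, rfl⟩ := getLast?_eq_some_iff.1 hw
  have hprefix := (isKaryPath_iff.1 h).2.2 t (prefix_append _ _)
  have htotal := height_eq_zero h
  simp only [height_append] at htotal
  have : height k [true] = k := by simp [height]
  omega

end IsKaryPath

lemma prefix_append_cases {α : Type*} {p u v : List α} (h : p <+: u ++ v) :
    p <+: u ∨ ∃ t, p = u ++ t ∧ t <+: v := by
  rcases prefix_or_prefix_of_prefix h (prefix_append u v) with hpu | ⟨t, rfl⟩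
  · exact Or.inl hpu
  · exact Or.inr ⟨t, rfl, (prefix_append_right_inj u).1 h⟩

end Words

def block (p : ℕ × ℕ) : List Bool := replicate p.1 true ++ replicate p.2 false

def ofBlocks (l : List (ℕ × ℕ)) : List Bool := l.flatMap block

def IsBlockList (l : List (ℕ × ℕ)) : Prop := ∀ p ∈ l, 0 < p.1 ∧ 0 < p.2

def blockHeight (k : ℕ) (p : ℕ × ℕ) : ℤ := k * p.1 - p.2

section Blocks

variable {k : ℕ} {l : List (ℕ × ℕ)}

@[simp] lemma ofBlocks_nil : ofBlocks [] = [] := rfl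

@[simp] lemma ofBlocks_cons (p : ℕ × ℕ) (l : List (ℕ × ℕ)) :
    ofBlocks (p :: l) = block p ++ ofBlocks l := flatMap_cons

@[simp] lemma ofBlocks_append (l l' : List (ℕ × ℕ)) :
    ofBlocks (l ++ l') = ofBlocks l ++ ofBlocks l' := flatMap_append

lemma isBlockList_cons {p : ℕ × ℕ} :
    IsBlockList (p :: l) ↔ (0 < p.1 ∧ 0 < p.2) ∧ IsBlockList l :=
  forall_mem_cons

@[simp] lemma height_block (p : ℕ × ℕ) : height k (block p) = blockHeight k p := by
  simp [block, blockHeight, sub_eq_add_neg]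

lemma height_ofBlocks (l : List (ℕ × ℕ)) :
    height k (ofBlocks l) = (l.map (blockHeight k)).sum := by
  induction l with
  | nil => simp
  | cons p l ih => simp [ih]

lemma count_true_ofBlocks (l : List (ℕ × ℕ)) :
    (ofBlocks l).count true = (l.map Prod.fst).sum := by
  induction l with
  | nil => rfl
  | cons p l ih => simp [block, count_replicate, ih]

lemma count_false_ofBlocks (l : List (ℕ × ℕ)) :
    (ofBlocks l).count false = (l.map Prod.snd).sum := by
  induction l with
  | nil => rfl
  | cons p l ih => simp [block, count_replicate, ih]

lemma sum_map_blockHeight (l : List (ℕ × ℕ)) :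
    (l.map (blockHeight k)).sum = k * (l.map Prod.fst).sum - (l.map Prod.snd).sum := by
  rw [← height_ofBlocks, height, count_true_ofBlocks, count_false_ofBlocks]

lemma head?_ofBlocks_ne (hl : IsBlockList l) : (ofBlocks l).head? ≠ some false := by
  cases l with
  | nil => simp
  | cons p l =>
    obtain ⟨_ | a, b⟩ := p
    · exact absurd (isBlockList_cons.1 hl).1.1 (lt_irrefl 0)
    simp [block, replicate_succ]

lemma replicate_append_inj {α : Type*} {x : α} {a a' : ℕ} {v v' : List α}
    (hv : v.head? ≠ some x) (hv' : v'.head? ≠ some x)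
    (h : replicate a x ++ v = replicate a' x ++ v') : a = a' ∧ v = v' := by
  induction a generalizing a' with
  | zero =>
    cases a' with
    | zero => simpa using h
    | succ a' => simp [replicate_succ] at h; simp [h] at hv
  | succ a ih =>
    cases a' with
    | zero => simp [replicate_succ] at h; simp [← h] at hv'
    | succ a' =>
      simp only [replicate_succ, cons_append, cons.injEq, true_and] at h
      exact (ih h).imp_left (congrArg (· + 1))

lemma ofBlocks_injOn : Set.InjOn ofBlocks {l | IsBlockList l} := by
  intro l hl l' hl' h
  induction l generalizing l' with
  | nil =>
    cases l' with
    | nil => rfl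
    | cons p l' =>
      have := (isBlockList_cons.1 hl').1.1
      simp [block] at h
      omega
  | cons p l ih =>
    cases l' with
    | nil =>
      have := (isBlockList_cons.1 hl).1.1
      simp [block] at h
      omega
    | cons p' l' =>
      obtain ⟨hp, hl⟩ := isBlockList_cons.1 hl
      obtain ⟨hp', hl'⟩ := isBlockList_cons.1 hl'
      have hfalse {b : ℕ} (hb : 0 < b) (v : List Bool) :
          (replicate b false ++ v).head? ≠ some true := by
        obtain ⟨b, rfl⟩ := Nat.exists_eq_add_of_lt hb; simp [replicate_succ]
      simp only [ofBlocks_cons, block, append_assoc] at h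
      obtain ⟨ha, h⟩ := replicate_append_inj (hfalse hp.2 _) (hfalse hp'.2 _) h
      obtain ⟨hb, h⟩ := replicate_append_inj (head?_ofBlocks_ne hl) (head?_ofBlocks_ne hl') h
      rw [ih hl hl' h, Prod.ext ha hb]

lemma exists_eq_replicate_false_append_ofBlocks {w : List Bool} (hw : w.getLast? ≠ some true) :
    ∃ c l, IsBlockList l ∧ w = replicate c false ++ ofBlocks l := by
  induction w with
  | nil => exact ⟨0, [], by simp [IsBlockList], rfl⟩
  | cons x w ih =>
    cases w with
    | nil =>
      cases x
      · exact ⟨1, [], by simp [IsBlockList], rfl⟩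
      · simp at hw
    | cons y w =>
      obtain ⟨c, l, hl, hyw⟩ := ih (by rwa [getLast?_cons_cons] at hw)
      cases x
      · exact ⟨c + 1, l, hl, by simp [hyw, replicate_succ]⟩
      cases c with
      | zero =>
        cases l with
        | nil => simp at hyw
        | cons p l =>
          refine ⟨0, (p.1 + 1, p.2) :: l, ?_, by simp [hyw, block, replicate_succ]⟩
          exact isBlockList_cons.2 ⟨⟨Nat.succ_pos _, (isBlockList_cons.1 hl).1.2⟩,
            (isBlockList_cons.1 hl).2⟩
      | succ c =>
        exact ⟨0, (1, c + 1) :: l, isBlockList_cons.2 ⟨by simp, hl⟩, by simp [hyw, block]⟩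

lemma exists_ofBlocks_eq {w : List Bool} (h₁ : w.head? ≠ some false)
    (h₂ : w.getLast? ≠ some true) : ∃ l, IsBlockList l ∧ ofBlocks l = w := by
  obtain ⟨c, l, hl, rfl⟩ := exists_eq_replicate_false_append_ofBlocks h₂
  cases c with
  | zero => exact ⟨l, hl, rfl⟩
  | succ c => simp [replicate_succ] at h₁

end Blocks

section Peaks

open scoped Classical in
lemma ncard_eq_ncard_preimage_succ_add {s : Set ℕ} (hs : s.Finite) :
    s.ncard = (Nat.succ ⁻¹' s).ncard + if 0 ∈ s then 1 else 0 := by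
  have hpre : (Nat.succ ⁻¹' s).ncard = (s \ {0}).ncard := by
    rw [← Set.ncard_image_of_injective _ Nat.succ_injective, Set.image_preimage_eq_inter_range,
      Nat.range_succ]
    congr 1
    ext i
    simp [Nat.pos_iff_ne_zero]
  split_ifs with h0
  · rw [hpre, Set.ncard_sdiff_singleton_add_one h0 hs]
  · rw [hpre, Set.sdiff_singleton_eq_self h0, add_zero]

lemma isPeakAt_cons_zero {x : Bool} {w : List Bool} :
    IsPeakAt (x :: w) 0 ↔ x = true ∧ w.head? = some false := by
  cases w <;> simp [IsPeakAt, eq_comm]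

lemma finite_setOf_isPeakAt (w : List Bool) : {i | IsPeakAt w i}.Finite := by
  refine (Set.finite_Iio w.length).subset fun i hi => ?_
  have := (hi : IsPeakAt w i).length_le
  simp only [length_cons, length_nil, length_drop] at this
  exact Set.mem_Iio.2 (by omega)

lemma numPeaks_cons (x : Bool) (w : List Bool) :
    numPeaks (x :: w) = numPeaks w + if x = true ∧ w.head? = some false then 1 else 0 := by
  rw [numPeaks, ncard_eq_ncard_preimage_succ_add (finite_setOf_isPeakAt _)]
  congr 1
  split_ifs with h₁ h₂ h₂ <;> simp_all [isPeakAt_cons_zero]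

lemma numPeaks_replicate_false_append (b : ℕ) (w : List Bool) :
    numPeaks (replicate b false ++ w) = numPeaks w := by
  induction b with
  | zero => rfl
  | succ b ih => simp [replicate_succ, numPeaks_cons, ih]

lemma numPeaks_replicate_true_append (a : ℕ) (w : List Bool) :
    numPeaks (replicate (a + 1) true ++ w) = numPeaks (true :: w) := by
  induction a with
  | zero => rfl
  | succ a ih => rw [replicate_succ, cons_append, numPeaks_cons, ih]; simp [replicate_succ]

lemma numPeaks_block_append {p : ℕ × ℕ} (hp : 0 < p.1 ∧ 0 < p.2) (w : List Bool) :
    numPeaks (block p ++ w) = numPeaks w + 1 := by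
  obtain ⟨a, b⟩ := p
  obtain ⟨ha, hb⟩ := hp
  obtain ⟨a, rfl⟩ := Nat.exists_eq_add_one_of_ne_zero ha.ne'
  obtain ⟨b, rfl⟩ := Nat.exists_eq_add_one_of_ne_zero hb.ne'
  rw [block, append_assoc, numPeaks_replicate_true_append, numPeaks_cons,
    numPeaks_replicate_false_append]
  simp [replicate_succ]

lemma numPeaks_ofBlocks {l : List (ℕ × ℕ)} (hl : IsBlockList l) :
    numPeaks (ofBlocks l) = l.length := by
  induction l with
  | nil => simp [numPeaks, IsPeakAt]
  | cons p l ih =>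
    obtain ⟨hp, hl⟩ := isBlockList_cons.1 hl
    rw [ofBlocks_cons, numPeaks_block_append hp, ih hl, length_cons]

end Peaks

section Prefixes

variable {k : ℕ}

lemma height_nonneg_or_ge_of_prefix_block {p : List Bool} {q : ℕ × ℕ} (h : p <+: block q) :
    0 ≤ height k p ∨ blockHeight k q ≤ height k p := by
  rcases prefix_append_cases h with h | ⟨t, rfl, ht⟩
  · rw [(prefix_replicate_iff.1 h).2]
    left
    simp only [height_replicate_true]
    positivity
  · rw [(prefix_replicate_iff.1 ht).2]
    have := (prefix_replicate_iff.1 ht).1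
    right
    simp [blockHeight]
    omega

lemma nonneg_add_height_of_prefix_ofBlocks {l : List (ℕ × ℕ)} {c : ℤ}
    (h : ∀ m, 0 ≤ c + ((l.map (blockHeight k)).take m).sum) :
    ∀ p, p <+: ofBlocks l → 0 ≤ c + height k p := by
  induction l generalizing c with
  | nil =>
    intro p hp
    simpa [prefix_nil.1 hp] using h 0
  | cons q l ih =>
    intro p hp
    rcases prefix_append_cases hp with hp | ⟨t, rfl, ht⟩
    · have h1 := h 1
      simp only [map_cons, take_succ_cons, take_zero, sum_cons, sum_nil, add_zero] at h1
      rcases height_nonneg_or_ge_of_prefix_block (k := k) hp with hp | hp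
      · have h0 := h 0
        simp only [take_zero, sum_nil, add_zero] at h0
        linarith
      · linarith
    · have := ih (c := c + blockHeight k q) (fun m => by simpa [add_assoc] using h (m + 1)) t ht
      simp only [height_append, height_block]
      linarith

lemma prefix_ofBlocks_take (l : List (ℕ × ℕ)) (m : ℕ) : ofBlocks (l.take m) <+: ofBlocks l :=
  ⟨ofBlocks (l.drop m), by rw [← ofBlocks_append, take_append_drop]⟩

theorem prefixes_nonneg_ofBlocks_iff {l : List (ℕ × ℕ)} :
    (∀ p, p <+: ofBlocks l → 0 ≤ height k p) ↔
      ∀ m, 0 ≤ ((l.map (blockHeight k)).take m).sum := by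
  refine ⟨fun h m => ?_, fun h => ?_⟩
  · simpa [height_ofBlocks, map_take] using h _ (prefix_ofBlocks_take l m)
  · simpa using nonneg_add_height_of_prefix_ofBlocks (c := 0) (by simpa using h)

end Prefixes

section CycleLemma

variable {x : List ℤ} {r m : ℕ}

lemma sum_take_rotate_of_le_sub (hr : r ≤ x.length) (hm : m ≤ x.length - r) :
    ((x.rotate r).take m).sum = (x.take (r + m)).sum - (x.take r).sum := by
  rw [rotate_eq_drop_append_take hr, take_append_of_le_length (by simpa using hm), take_add,
    sum_append]
  ring

lemma sum_take_rotate_of_sub_le (hr : r ≤ x.length) (hm : x.length - r ≤ m)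
    (hm' : m ≤ x.length) :
    ((x.rotate r).take m).sum = x.sum - (x.take r).sum + (x.take (m - (x.length - r))).sum := by
  rw [rotate_eq_drop_append_take hr, take_append, take_of_length_le (by simpa using hm),
    length_drop, take_take, min_eq_left (by omega), sum_append, ← sum_take_add_sum_drop x r]
  ring

lemma exists_first_argmin (S : ℕ → ℤ) (L : ℕ) :
    ∃ r ≤ L, (∀ q ≤ L, S r ≤ S q) ∧ ∀ q < r, S r < S q := by
  classical
  have h : ∃ r, r ≤ L ∧ ∀ q ≤ L, S r ≤ S q := by
    obtain ⟨r, hr, hmin⟩ := Finset.exists_min_image (Finset.range (L + 1)) S ⟨0, by simp⟩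
    exact ⟨r, Nat.lt_succ_iff.1 (Finset.mem_range.1 hr),
      fun q hq => hmin q (Finset.mem_range.2 (Nat.lt_succ_of_le hq))⟩
  refine ⟨Nat.find h, (Nat.find_spec h).1, (Nat.find_spec h).2, fun q hq => ?_⟩
  have hnot := Nat.find_min h hq
  push Not at hnot
  obtain ⟨q', hq', hlt⟩ := hnot (hq.le.trans (Nat.find_spec h).1)
  exact ((Nat.find_spec h).2 q' hq').trans_lt hlt

/-- Rotations are indexed by `1 ≤ r ≤ length`, so that the good rotation is the one at the first
minimum of the prefix sums on `[0, length]`; that minimum is never at `0`, as the total is `-1`. -/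
theorem rotate_prefix_sums_nonneg_iff (hx : x.sum = -1) (hr₁ : 1 ≤ r) (hr : r ≤ x.length) :
    (∀ m < x.length, 0 ≤ ((x.rotate r).take m).sum) ↔
      (∀ q ≤ x.length, (x.take r).sum ≤ (x.take q).sum) ∧
        ∀ q < r, (x.take r).sum < (x.take q).sum := by
  constructor
  · intro h
    have hbefore : ∀ q < r, (x.take r).sum < (x.take q).sum := by
      intro q hq
      have := h (q + (x.length - r)) (by omega)
      rw [sum_take_rotate_of_sub_le hr (by omega) (by omega),
        show q + (x.length - r) - (x.length - r) = q by omega, hx] at this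
      linarith
    refine ⟨fun q hq => ?_, hbefore⟩
    rcases lt_or_ge q r with hqr | hqr
    · exact (hbefore q hqr).le
    · have := h (q - r) (by omega)
      rw [sum_take_rotate_of_le_sub hr (by omega), show r + (q - r) = q by omega] at this
      linarith
  · rintro ⟨hmin, hbefore⟩ m hm
    rcases le_or_gt m (x.length - r) with hmr | hmr
    · rw [sum_take_rotate_of_le_sub hr hmr]
      linarith [hmin (r + m) (by omega)]
    · rw [sum_take_rotate_of_sub_le hr hmr.le hm.le, hx]
      linarith [hbefore (m - (x.length - r)) (by omega)]

theorem existsUnique_rotate_prefix_sums_nonneg (hx : x.sum = -1) :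
    ∃! r, (1 ≤ r ∧ r ≤ x.length) ∧ ∀ m < x.length, 0 ≤ ((x.rotate r).take m).sum := by
  obtain ⟨r, hrL, hmin, hbefore⟩ := exists_first_argmin (fun q => (x.take q).sum) x.length
  have hr₁ : 1 ≤ r := by
    by_contra h0
    have := hmin x.length le_rfl
    simp_all
  refine ⟨r, ⟨⟨hr₁, hrL⟩, (rotate_prefix_sums_nonneg_iff hx hr₁ hrL).2 ⟨hmin, hbefore⟩⟩, ?_⟩
  rintro s ⟨⟨hs₁, hsL⟩, hs⟩
  obtain ⟨hsmin, hsbefore⟩ := (rotate_prefix_sums_nonneg_iff hx hs₁ hsL).1 hs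
  by_contra hne
  rcases Nat.lt_or_gt_of_ne hne with h | h
  · exact (hbefore s h).not_ge (hsmin r hrL)
  · exact (hsbefore r h).not_ge (hmin s hsL)

end CycleLemma

theorem mul_ncard_sep_eq_ncard_of_existsUnique_rotate {α : Type*} {j : ℕ} {B : Set (List α)}
    {P : List α → Prop} (hlen : ∀ L ∈ B, L.length = j) (hrot : ∀ L ∈ B, ∀ r, L.rotate r ∈ B)
    (hP : ∀ L ∈ B, ∃! r, (1 ≤ r ∧ r ≤ j) ∧ P (L.rotate r)) :
    j * {L ∈ B | P L}.ncard = B.ncard := by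
  have rotate_sub (L : List α) (hL : L ∈ B) {t : ℕ} (ht : t ≤ j) :
      (L.rotate t).rotate (j - t) = L := by
    rw [rotate_rotate, Nat.add_sub_cancel' ht, ← hlen L hL, rotate_length]
  let Φ : Fin j × {L | L ∈ B ∧ P L} → B := fun tL => ⟨tL.2.1.rotate tL.1, hrot _ tL.2.2.1 _⟩
  have hΦ : Function.Bijective Φ := by
    constructor
    · rintro ⟨t₁, L₁, hL₁, hP₁⟩ ⟨t₂, L₂, hL₂, hP₂⟩ h
      obtain ⟨M, hM, h₁, h₂⟩ : ∃ M ∈ B, L₁.rotate t₁ = M ∧ L₂.rotate t₂ = M :=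
        ⟨_, hrot _ hL₁ _, rfl, (Subtype.ext_iff.1 h).symm⟩
      have e₁ := rotate_sub L₁ hL₁ t₁.2.le
      have e₂ := rotate_sub L₂ hL₂ t₂.2.le
      rw [h₁] at e₁
      rw [h₂] at e₂
      have ht : j - t₁ = j - t₂ := (hP M hM).unique
        ⟨by omega, by rwa [e₁]⟩ ⟨by omega, by rwa [e₂]⟩
      have ht' : t₁ = t₂ := Fin.ext (by omega)
      subst ht'
      rw [e₁] at e₂
      simp [e₂]
    · rintro ⟨M, hM⟩
      obtain ⟨r, ⟨⟨hr₁, hrj⟩, hPr⟩, -⟩ := hP M hM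
      refine ⟨(⟨j - r, by omega⟩, ⟨M.rotate r, hrot M hM r, hPr⟩), Subtype.ext ?_⟩
      exact rotate_sub M hM hrj
  rw [← Nat.card_coe_set_eq, ← Nat.card_coe_set_eq, ← Nat.card_congr (Equiv.ofBijective Φ hΦ),
    Nat.card_prod, Nat.card_eq_fintype_card (α := Fin j), Fintype.card_fin]

section Compositions

def compositions (j m : ℕ) : Set (List ℕ) := {x | x.length = j ∧ (∀ a ∈ x, 0 < a) ∧ x.sum = m}

lemma compositions_one {m : ℕ} (hm : 0 < m) : compositions 1 m = {[m]} := by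
  ext x
  simp only [compositions, Set.mem_ofPred_eq, Set.mem_singleton_iff, length_eq_one_iff]
  constructor
  · rintro ⟨⟨a, rfl⟩, -, hs⟩
    simpa using hs
  · rintro rfl
    simp [hm]

lemma compositions_zero_succ (m : ℕ) : compositions 0 (m + 1) = ∅ := by
  ext x
  simp only [compositions, Set.mem_ofPred_eq, Set.mem_empty_iff_false, iff_false,
    length_eq_zero_iff]
  rintro ⟨rfl, -, h⟩
  simp at h

lemma compositions_add_two_one (j : ℕ) : compositions (j + 2) 1 = ∅ := by
  ext x
  simp only [compositions, Set.mem_ofPred_eq, Set.mem_empty_iff_false, iff_false]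
  rintro ⟨hlen, hpos, hsum⟩
  have := length_le_sum_of_one_le x hpos
  omega

lemma compositions_succ_add_two (j m : ℕ) :
    compositions (j + 1) (m + 2) =
      cons 1 '' compositions j (m + 1) ∪ modifyHead Nat.succ '' compositions (j + 1) (m + 1) := by
  ext x
  simp only [compositions, Set.mem_union, Set.mem_image, Set.mem_ofPred_eq]
  constructor
  · rintro ⟨hlen, hpos, hsum⟩
    obtain ⟨a, y, rfl⟩ := exists_cons_of_length_eq_add_one hlen
    simp only [length_cons, add_left_inj, mem_cons, forall_eq_or_imp, sum_cons] at hlen hpos hsum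
    rcases Nat.lt_or_ge 1 a with ha | ha
    · right
      refine ⟨(a - 1) :: y, ⟨by simp [hlen], ?_, ?_⟩, ?_⟩
      · simpa [show 0 < a - 1 by omega] using hpos.2
      · simp; omega
      · simp; omega
    · left
      obtain rfl : a = 1 := by omega
      exact ⟨y, ⟨hlen, hpos.2, by omega⟩, rfl⟩
  · rintro (⟨y, ⟨hlen, hpos, hsum⟩, rfl⟩ | ⟨y, ⟨hlen, hpos, hsum⟩, rfl⟩)
    · simp_all
      omega
    · obtain ⟨a, y, rfl⟩ := exists_cons_of_length_eq_add_one hlen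
      simp_all
      omega

-- `encard` is additive on disjoint unions without finiteness side conditions.
theorem encard_compositions (m j : ℕ) : (compositions (j + 1) (m + 1)).encard = m.choose j := by
  induction m generalizing j with
  | zero =>
    cases j with
    | zero => simp [compositions_one]
    | succ j => simp [compositions_add_two_one]
  | succ m ih =>
    have hhead : Function.Injective (modifyHead Nat.succ) := by
      intro x y h
      cases x <;> cases y <;> simp_all
    rw [compositions_succ_add_two, Set.encard_union_eq ?_, cons_injective.encard_image,
      hhead.encard_image, ih]
    · cases j with
      | zero => simp [compositions_zero_succ]
      | succ j => rw [ih, Nat.choose_succ_succ']; push_cast; ring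
    · rw [Set.disjoint_left]
      rintro _ ⟨y, -, rfl⟩ ⟨z, ⟨-, hz, -⟩, h⟩
      cases z with
      | nil => simp at h
      | cons a z => simp at h; simp_all

theorem ncard_compositions (m j : ℕ) : (compositions (j + 1) (m + 1)).ncard = m.choose j := by
  rw [Set.ncard_def, encard_compositions, ENat.toNat_natCast]

end Compositions

lemma ncard_setOf_map_fst_snd_mem {α β : Type*} {j : ℕ} {s : Set (List α)} {t : Set (List β)}
    (hs : ∀ x ∈ s, x.length = j) (ht : ∀ y ∈ t, y.length = j) :
    {L : List (α × β) | L.map Prod.fst ∈ s ∧ L.map Prod.snd ∈ t}.ncard = s.ncard * t.ncard := by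
  have hinj : Function.Injective fun L : List (α × β) => (L.map Prod.fst, L.map Prod.snd) := by
    intro L L' h
    simpa [← unzip_fst, ← unzip_snd, zip_unzip] using congrArg (fun p => p.1.zip p.2) h
  have himage : (fun L : List (α × β) => (L.map Prod.fst, L.map Prod.snd)) ''
      {L | L.map Prod.fst ∈ s ∧ L.map Prod.snd ∈ t} = s ×ˢ t := by
    ext ⟨x, y⟩
    constructor
    · rintro ⟨L, hL, h⟩
      simp only [Prod.mk.injEq] at h
      rw [← h.1, ← h.2]
      exact hL
    · rintro ⟨hx, hy⟩
      have hxy : x.length = y.length := (hs x hx).trans (ht y hy).symm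
      refine ⟨x.zip y, ?_, ?_⟩ <;> simp [map_fst_zip hxy.le, map_snd_zip hxy.ge, hx, hy]
  rw [← Set.ncard_prod, ← himage, Set.ncard_image_of_injective _ hinj]

variable {k n j : ℕ}

def pathBlockLists (k n j : ℕ) : Set (List (ℕ × ℕ)) :=
  {l | IsBlockList l ∧ l.length = j ∧ IsKaryPath k n (ofBlocks l)}

def compositionPairs (k n j : ℕ) : Set (List (ℕ × ℕ)) :=
  {L | L.map Prod.fst ∈ compositions j n ∧ L.map Prod.snd ∈ compositions j (k * n + 1)}

def goodCompositionPairs (k n j : ℕ) : Set (List (ℕ × ℕ)) :=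
  {L ∈ compositionPairs k n j | ∀ m < L.length, 0 ≤ ((L.map (blockHeight k)).take m).sum}

/-- Appends a `D` to the last block: `ofBlocks (incLast l) = ofBlocks l ++ [false]`. -/
def incLast : List (ℕ × ℕ) → List (ℕ × ℕ) := modifyLast fun p => (p.1, p.2 + 1)

lemma mem_compositionPairs {L : List (ℕ × ℕ)} :
    L ∈ compositionPairs k n j ↔ IsBlockList L ∧ L.length = j ∧
      (L.map Prod.fst).sum = n ∧ (L.map Prod.snd).sum = k * n + 1 := by
  simp only [compositionPairs, compositions, IsBlockList, Set.mem_ofPred_eq, length_map,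
    forall_mem_map, forall_and]
  tauto

theorem setOf_isKaryPath_numPeaks_eq (hk : 0 < k) :
    {w | IsKaryPath k n w ∧ numPeaks w = j} = ofBlocks '' pathBlockLists k n j := by
  ext w
  constructor
  · rintro ⟨hw, rfl⟩
    obtain ⟨l, hl, rfl⟩ :=
      exists_ofBlocks_eq (IsKaryPath.head?_ne hw) (IsKaryPath.getLast?_ne hk hw)
    exact ⟨l, ⟨hl, (numPeaks_ofBlocks hl).symm, hw⟩, rfl⟩
  · rintro ⟨l, ⟨hl, rfl, hw⟩, rfl⟩
    exact ⟨hw, numPeaks_ofBlocks hl⟩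

lemma incLast_injective : Function.Injective incLast := by
  have hnil : incLast [] = [] := rfl
  intro l l' h
  rcases eq_nil_or_concat' l with rfl | ⟨l, p, rfl⟩ <;>
    rcases eq_nil_or_concat' l' with rfl | ⟨l', p', rfl⟩ <;>
    simp_all [incLast, modifyLast_concat, Prod.ext_iff]

lemma take_map_append_singleton {α β : Type*} (f : α → β) {l : List α} (x : α) {m : ℕ}
    (hm : m ≤ l.length) : ((l ++ [x]).map f).take m = (l.map f).take m := by
  simp [take_append_of_le_length, hm]

lemma isBlockList_concat {l : List (ℕ × ℕ)} {a b : ℕ} :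
    IsBlockList (l ++ [(a, b)]) ↔ IsBlockList l ∧ 0 < a ∧ 0 < b := by
  simp only [IsBlockList, forall_mem_append, forall_mem_singleton]

lemma incLast_mem_goodCompositionPairs (hj : 0 < j) {l : List (ℕ × ℕ)}
    (hl : l ∈ pathBlockLists k n j) : incLast l ∈ goodCompositionPairs k n j := by
  obtain ⟨hblock, hlen, hw⟩ := hl
  obtain ⟨hfst, hsnd, hprefix⟩ := isKaryPath_iff.1 hw
  rw [prefixes_nonneg_ofBlocks_iff] at hprefix
  obtain ⟨l, ⟨a, b⟩, rfl⟩ :=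
    (eq_nil_or_concat' l).resolve_left (by rintro rfl; simp at hlen; omega)
  obtain ⟨hblock, ha, -⟩ := isBlockList_concat.1 hblock
  rw [count_true_ofBlocks] at hfst
  rw [count_false_ofBlocks] at hsnd
  simp only [incLast, modifyLast_concat]
  refine ⟨mem_compositionPairs.2 ⟨isBlockList_concat.2 ⟨hblock, ha, b.succ_pos⟩,
    by simpa using hlen, by simpa using hfst, by simp at hsnd ⊢; omega⟩, fun m hm => ?_⟩
  simp only [length_append, length_singleton] at hm
  have := hprefix m
  rwa [take_map_append_singleton _ _ (Nat.lt_succ_iff.1 hm)] at this ⊢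

lemma exists_incLast_eq_of_mem_goodCompositionPairs (hk : 0 < k) (hj : 0 < j)
    {L : List (ℕ × ℕ)} (hL : L ∈ goodCompositionPairs k n j) :
    ∃ l ∈ pathBlockLists k n j, incLast l = L := by
  obtain ⟨hL, hgood⟩ := hL
  obtain ⟨hblock, hlen, hfst, hsnd⟩ := mem_compositionPairs.1 hL
  obtain ⟨L, ⟨a, b⟩, rfl⟩ :=
    (eq_nil_or_concat' L).resolve_left (by rintro rfl; simp at hlen; omega)
  obtain ⟨hblock, ha, -⟩ := isBlockList_concat.1 hblock
  simp only [length_append, length_singleton, map_append, map_cons, map_nil, sum_append,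
    sum_cons, sum_nil, add_zero] at hlen hfst hsnd
  have hinit : 0 ≤ (L.map (blockHeight k)).sum := by
    simpa [take_map_append_singleton, take_of_length_le] using hgood L.length (by simp)
  have htotal := sum_map_blockHeight (k := k) (L ++ [(a, b)])
  simp only [map_append, map_cons, map_nil, sum_append, sum_cons, sum_nil, add_zero, hfst,
    hsnd, blockHeight] at htotal
  -- the last block of a good list has at least two `D`s, so it can give one back
  have hka : (0 : ℤ) < k * a := by exact_mod_cast Nat.mul_pos hk ha
  have hb : 2 ≤ b := by push_cast at htotal; omega
  refine ⟨L ++ [(a, b - 1)], ⟨isBlockList_concat.2 ⟨hblock, ha, by omega⟩, by simpa using hlen,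
    isKaryPath_iff.2 ⟨?_, ?_, prefixes_nonneg_ofBlocks_iff.2 fun m => ?_⟩⟩, ?_⟩
  · rw [count_true_ofBlocks]
    simpa using hfst
  · rw [count_false_ofBlocks]
    simp
    omega
  · rcases le_or_gt m L.length with hm | hm
    · have := hgood m (by simp; omega)
      rwa [take_map_append_singleton _ _ hm] at this ⊢
    · rw [take_of_length_le (by simp; omega)]
      simp only [map_append, map_cons, map_nil, sum_append, sum_cons, sum_nil, add_zero,
        blockHeight]
      push_cast [Nat.cast_sub (by omega : 1 ≤ b)] at htotal ⊢
      linarith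
  · simp only [incLast, modifyLast_concat]
    congr 3
    omega

theorem goodCompositionPairs_eq_image (hk : 0 < k) (hj : 0 < j) :
    goodCompositionPairs k n j = incLast '' pathBlockLists k n j :=
  Set.ext fun _ => ⟨exists_incLast_eq_of_mem_goodCompositionPairs hk hj,
    fun ⟨_, hl, hL⟩ => hL ▸ incLast_mem_goodCompositionPairs hj hl⟩

theorem mul_ncard_goodCompositionPairs :
    j * (goodCompositionPairs k n j).ncard = (compositionPairs k n j).ncard := by
  refine mul_ncard_sep_eq_ncard_of_existsUnique_rotate (fun L hL => (mem_compositionPairs.1 hL).2.1)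
    (fun L hL r => ?_) (fun L hL => ?_)
  · obtain ⟨hblock, hlen, hfst, hsnd⟩ := mem_compositionPairs.1 hL
    have hperm := rotate_perm L r
    exact mem_compositionPairs.2 ⟨fun p hp => hblock p (hperm.subset hp), by simp [hlen],
      by rw [(hperm.map _).sum_eq, hfst], by rw [(hperm.map _).sum_eq, hsnd]⟩
  · obtain ⟨hblock, hlen, hfst, hsnd⟩ := mem_compositionPairs.1 hL
    have hsum : (L.map (blockHeight k)).sum = -1 := by
      rw [sum_map_blockHeight, hfst, hsnd]
      push_cast
      ring
    simpa [map_rotate, hlen] using existsUnique_rotate_prefix_sums_nonneg hsum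

theorem ncard_compositionPairs :
    (compositionPairs k n j).ncard =
      (compositions j n).ncard * (compositions j (k * n + 1)).ncard :=
  ncard_setOf_map_fst_snd_mem (fun _ hx => hx.1) (fun _ hy => hy.1)

end KaryPath

open KaryPath

/-- The number of `k`-ary paths of order `(k+1)n` with exactly `j` peaks is
`(1/j)·C(n−1, j−1)·C(kn, j−1)`: `j` times this number equals
`C(n−1, j−1)·C(kn, j−1)`. -/
theorem stmt16 (k n j : ℕ) (hk : 0 < k) (hn : 0 < n) (hj : 0 < j) :
    j * {w : List Bool | IsKaryPath k n w ∧ numPeaks w = j}.ncard =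
      (n - 1).choose (j - 1) * (k * n).choose (j - 1) := by
  rw [setOf_isKaryPath_numPeaks_eq hk, (ofBlocks_injOn.mono fun _ hl => hl.1).ncard_image,
    ← incLast_injective.injOn.ncard_image, ← goodCompositionPairs_eq_image hk hj,
    mul_ncard_goodCompositionPairs, ncard_compositionPairs]
  obtain ⟨j, rfl⟩ := Nat.exists_eq_add_one_of_ne_zero hj.ne'
  obtain ⟨n, rfl⟩ := Nat.exists_eq_add_one_of_ne_zero hn.ne'
  rw [ncard_compositions, ncard_compositions]
  simp
end
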